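/- arXiv:1202.0423 — 6 statements merged into one kernel-verified Lean document; each statement's English description precedes it below -/
import Mathlib

section
/- Let α ∈ ℂ, α ≠ 0, and let Ω ⊆ ℂ be a nonempty connected open set such that qΩ ⊆ Ω. Let y be holomorphic on Ω and satisfy y′(x) = α·y(qx) − y(x) for all x ∈ Ω. If there exists R > 0 such that sup{|y(x)| : x ∈ Ω, |x| < R} < ∞, then there exists an entire function Y : ℂ → ℂ with Y(x) = y(x) for all x ∈ Ω. -/
/-!
The power series `E(z) = ∑ aₙ zⁿ` with `a₀ = 1` and `(n + 1) aₙ₊₁ = (α qⁿ - 1) aₙ` is an entire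
solution, and we show that `y = c E` on `Ω` for some `c`. Fix `x₀ ∈ Ω` and a compact neighbourhood
`K ⊆ Ω` of `x₀` containing `q x₀`, over which every function varies by at most `ℓ` times a bound
on its derivative (a finite chain of small balls, by connectedness). On the scaled copies `σ qᵏ K`
(with `σ` a small power of `q`) the equation bounds the derivative of a solution by the solution
itself, gaining a factor `σ qᵏ` from the chain rule. Telescoping along the orbit `σ qᵏ x₀` then
shows that `y(σ qᵏ x₀)` converges to some `c`, and that `u = y - c E`, for which this orbit tends
to `0`, satisfies `sup |u| ≤ σ κ sup |u|` over all the copies, with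
`κ = (‖α‖ + 1) ℓ (1 + (1 - q)⁻¹)`. Choosing `σ κ < 1` forces `u = 0` on `σ K`, hence on `Ω` by the
identity theorem.
-/

open Filter Metric Set Topology Finset
open scoped Nat

section MeanValue

variable {𝕜 : Type*} [RCLike 𝕜]

def HasMeanValueBound (F : Type*) [NormedAddCommGroup F] [NormedSpace 𝕜 F] (K : Set 𝕜) (a : 𝕜)
    (ℓ : ℝ) : Prop :=
  ∀ (f f' : 𝕜 → F) (B : ℝ), (∀ z ∈ K, HasDerivAt f (f' z) z) → (∀ z ∈ K, ‖f' z‖ ≤ B) →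
    ∀ z ∈ K, ‖f z - f a‖ ≤ B * ℓ

variable {F : Type*} [NormedAddCommGroup F] [NormedSpace 𝕜 F] {K K₁ K₂ Ω : Set 𝕜} {a b : 𝕜}
  {ℓ ℓ₁ ℓ₂ : ℝ}

theorem Convex.hasMeanValueBound (hK : Convex ℝ K) (ha : a ∈ K) (hℓ : ∀ z ∈ K, ‖z - a‖ ≤ ℓ) :
    HasMeanValueBound F K a ℓ := by
  intro f f' B hf hB z hz
  calc ‖f z - f a‖ ≤ B * ‖z - a‖ :=
        hK.norm_image_sub_le_of_norm_hasDerivWithin_le (fun w hw ↦ (hf w hw).hasDerivWithinAt)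
          hB ha hz
    _ ≤ B * ℓ := mul_le_mul_of_nonneg_left (hℓ z hz) ((norm_nonneg _).trans (hB a ha))

theorem HasMeanValueBound.union (h₁ : HasMeanValueBound F K₁ a ℓ₁)
    (h₂ : HasMeanValueBound F K₂ b ℓ₂) (hb : b ∈ K₁) (hℓ₂ : 0 ≤ ℓ₂) :
    HasMeanValueBound F (K₁ ∪ K₂) a (ℓ₁ + ℓ₂) := by
  intro f f' B hf hB z hz
  have hB₀ : 0 ≤ B := (norm_nonneg _).trans (hB b (Or.inl hb))
  have h₁' := h₁ f f' B (fun w hw ↦ hf w (Or.inl hw)) (fun w hw ↦ hB w (Or.inl hw))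
  rcases hz with hz | hz
  · nlinarith [h₁' z hz]
  · calc ‖f z - f a‖ ≤ ‖f z - f b‖ + ‖f b - f a‖ := norm_sub_le_norm_sub_add_norm_sub _ _ _
      _ ≤ B * ℓ₂ + B * ℓ₁ :=
          add_le_add (h₂ f f' B (fun w hw ↦ hf w (Or.inr hw)) (fun w hw ↦ hB w (Or.inr hw)) z hz)
            (h₁' b hb)
      _ = B * (ℓ₁ + ℓ₂) := by ring

theorem IsOpen.exists_hasMeanValueBound (hΩ : IsOpen Ω) (hΩc : IsPreconnected Ω) (ha : a ∈ Ω)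
    (hb : b ∈ Ω) :
    ∃ K ⊆ Ω, IsCompact K ∧ K ∈ 𝓝 a ∧ b ∈ K ∧ ∃ ℓ, 0 ≤ ℓ ∧ HasMeanValueBound F K a ℓ := by
  refine hΩc.induction₂' (fun a b ↦ ∃ K ⊆ Ω, IsCompact K ∧ K ∈ 𝓝 a ∧ b ∈ K ∧
    ∃ ℓ, 0 ≤ ℓ ∧ HasMeanValueBound F K a ℓ) (fun x hx ↦ ?_) ?_ ha hb
  · obtain ⟨ε, hε, hball⟩ := Metric.isOpen_iff.mp hΩ x hx
    have hsub : closedBall x (ε / 2) ⊆ Ω := (closedBall_subset_ball (by linarith)).trans hball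
    have hnhds : ∀ w ∈ ball x (ε / 2), closedBall x (ε / 2) ∈ 𝓝 w := fun w hw ↦
      mem_of_superset (isOpen_ball.mem_nhds hw) ball_subset_closedBall
    have hmvb : ∀ w ∈ closedBall x (ε / 2), HasMeanValueBound F (closedBall x (ε / 2)) w ε :=
      fun w hw ↦ (convex_closedBall x _).hasMeanValueBound hw fun z hz ↦ by
        rw [← dist_eq_norm]
        linarith [dist_triangle_right z w x, mem_closedBall.mp hz, mem_closedBall.mp hw]
    have hx' : x ∈ ball x (ε / 2) := mem_ball_self (half_pos hε)
    filter_upwards [nhdsWithin_le_nhds (ball_mem_nhds x (half_pos hε))] with y hy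
    exact ⟨⟨_, hsub, isCompact_closedBall _ _, hnhds x hx', ball_subset_closedBall hy, ε, hε.le,
        hmvb x (ball_subset_closedBall hx')⟩,
      ⟨_, hsub, isCompact_closedBall _ _, hnhds y hy, ball_subset_closedBall hx', ε, hε.le,
        hmvb y (ball_subset_closedBall hy)⟩⟩
  · rintro x y z - - - ⟨K₁, hK₁Ω, hK₁, hK₁x, hyK₁, ℓ₁, hℓ₁, h₁⟩
      ⟨K₂, hK₂Ω, hK₂, -, hzK₂, ℓ₂, hℓ₂, h₂⟩
    exact ⟨K₁ ∪ K₂, union_subset hK₁Ω hK₂Ω, hK₁.union hK₂, mem_of_superset hK₁x subset_union_left,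
      Or.inr hzK₂, ℓ₁ + ℓ₂, add_nonneg hℓ₁ hℓ₂, h₁.union h₂ hyK₁ hℓ₂⟩

end MeanValue

section Series

variable (q : ℝ) (α : ℂ)

noncomputable def pantographCoeff (n : ℕ) : ℂ := (∏ k ∈ range n, (α * q ^ k - 1)) / n !

noncomputable def pantographSeries (z : ℂ) : ℂ := ∑' n, pantographCoeff q α n * z ^ n

def IsPantographSolution (Ω : Set ℂ) (u : ℂ → ℂ) : Prop :=
  ∀ x ∈ Ω, HasDerivAt u (α * u (q * x) - u x) x

variable {q α}

theorem succ_mul_pantographCoeff_succ (n : ℕ) :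
    (n + 1) * pantographCoeff q α (n + 1) = (α * q ^ n - 1) * pantographCoeff q α n := by
  simp only [pantographCoeff, prod_range_succ, Nat.factorial_succ]
  push_cast
  field_simp

theorem norm_pantographCoeff_le (hq0 : 0 ≤ q) (hq1 : q ≤ 1) (n : ℕ) :
    ‖pantographCoeff q α n‖ ≤ (‖α‖ + 1) ^ n / n ! := by
  rw [pantographCoeff, norm_div, norm_prod, Complex.norm_natCast]
  gcongr
  calc ∏ k ∈ range n, ‖α * q ^ k - 1‖ ≤ ∏ _k ∈ range n, (‖α‖ + 1) :=
        prod_le_prod (fun _ _ ↦ norm_nonneg _) fun k _ ↦ ?_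
    _ = (‖α‖ + 1) ^ n := by rw [prod_const, card_range]
  have hqk : ‖(q : ℂ) ^ k‖ ≤ 1 := by
    rw [norm_pow, Complex.norm_real, Real.norm_of_nonneg hq0]
    exact pow_le_one₀ hq0 hq1
  calc ‖α * q ^ k - 1‖ ≤ ‖α‖ * ‖(q : ℂ) ^ k‖ + 1 := by
        simpa only [norm_mul, norm_one] using norm_sub_le (α * q ^ k) 1
    _ ≤ ‖α‖ + 1 := by nlinarith [norm_nonneg α]

theorem summable_pantographCoeff_mul_pow (hq0 : 0 ≤ q) (hq1 : q ≤ 1) (z : ℂ) :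
    Summable fun n ↦ pantographCoeff q α n * z ^ n := by
  refine .of_norm_bounded (Real.summable_pow_div_factorial ((‖α‖ + 1) * ‖z‖)) fun n ↦ ?_
  rw [norm_mul, norm_pow, mul_pow, mul_div_right_comm]
  exact mul_le_mul_of_nonneg_right (norm_pantographCoeff_le hq0 hq1 n) (by positivity)

theorem norm_pantographCoeff_mul_deriv_pow_le (hq0 : 0 ≤ q) (hq1 : q ≤ 1) (n : ℕ) {z : ℂ}
    {ρ : ℝ} (hρ : 1 ≤ ρ) (hz : ‖z‖ ≤ ρ) :
    ‖pantographCoeff q α n * (n * z ^ (n - 1))‖ ≤ (2 * (‖α‖ + 1) * ρ) ^ n / n ! := by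
  have hpow : (n : ℝ) * ‖z‖ ^ (n - 1) ≤ 2 ^ n * ρ ^ n :=
    mul_le_mul (by exact_mod_cast Nat.lt_two_pow_self.le)
      ((pow_le_pow_left₀ (norm_nonneg z) hz _).trans (pow_le_pow_right₀ hρ (Nat.sub_le n 1)))
      (by positivity) (by positivity)
  calc ‖pantographCoeff q α n * (n * z ^ (n - 1))‖
      = ‖pantographCoeff q α n‖ * ((n : ℝ) * ‖z‖ ^ (n - 1)) := by
        rw [norm_mul, norm_mul, norm_pow, Complex.norm_natCast]
    _ ≤ (‖α‖ + 1) ^ n / n ! * (2 ^ n * ρ ^ n) :=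
        mul_le_mul (norm_pantographCoeff_le hq0 hq1 n) hpow (by positivity) (by positivity)
    _ = (2 * (‖α‖ + 1) * ρ) ^ n / n ! := by rw [mul_pow, mul_pow]; ring

theorem hasDerivAt_pantographSeries (hq0 : 0 ≤ q) (hq1 : q ≤ 1) (z : ℂ) :
    HasDerivAt (pantographSeries q α)
      (α * pantographSeries q α (q * z) - pantographSeries q α z) z := by
  have hρ : 1 ≤ ‖z‖ + 1 := by linarith [norm_nonneg z]
  have hderiv := hasDerivAt_tsum_of_isPreconnected
    (Real.summable_pow_div_factorial (2 * (‖α‖ + 1) * (‖z‖ + 1))) isOpen_ball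
    (convex_ball 0 (‖z‖ + 1)).isPreconnected (g := fun n w ↦ pantographCoeff q α n * w ^ n)
    (fun n w _ ↦ (hasDerivAt_pow n w).const_mul _)
    (fun n w hw ↦ norm_pantographCoeff_mul_deriv_pow_le hq0 hq1 n hρ (mem_ball_zero_iff.mp hw).le)
    (mem_ball_self (by positivity)) (summable_pantographCoeff_mul_pow hq0 hq1 0)
    (mem_ball_zero_iff.mpr (lt_add_one _))
  suffices α * pantographSeries q α (q * z) - pantographSeries q α z =
      ∑' n, pantographCoeff q α n * (n * z ^ (n - 1)) from this ▸ hderiv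
  rw [Summable.tsum_eq_zero_add (.of_norm_bounded (Real.summable_pow_div_factorial _)
    fun n ↦ norm_pantographCoeff_mul_deriv_pow_le hq0 hq1 n hρ (by linarith [norm_nonneg z]))]
  simp only [pantographSeries, ← tsum_mul_left, Nat.cast_zero, zero_mul, mul_zero, zero_add,
    ← ((summable_pantographCoeff_mul_pow hq0 hq1 (q * z)).mul_left α).tsum_sub
      (summable_pantographCoeff_mul_pow hq0 hq1 z)]
  refine tsum_congr fun n ↦ ?_
  push_cast
  rw [mul_pow]
  linear_combination (-z ^ n) * succ_mul_pantographCoeff_succ (q := q) (α := α) n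

theorem pantographSeries_zero : pantographSeries q α 0 = 1 := by
  rw [pantographSeries, tsum_eq_single 0 fun n hn ↦ by simp [hn]]
  simp [pantographCoeff]

theorem differentiable_pantographSeries (hq0 : 0 ≤ q) (hq1 : q ≤ 1) :
    Differentiable ℂ (pantographSeries q α) :=
  fun z ↦ (hasDerivAt_pantographSeries hq0 hq1 z).differentiableAt

end Series

theorem AnalyticOnNhd.eqOn_zero_of_eventually_comp_mul {𝕜 F : Type*} [NontriviallyNormedField 𝕜]
    [NormedAddCommGroup F] [NormedSpace 𝕜 F] {f : 𝕜 → F} {U : Set 𝕜}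
    (hf : AnalyticOnNhd 𝕜 f U) (hU : IsPreconnected U) {s z₀ : 𝕜} (hs : s ≠ 0) (hz₀ : s * z₀ ∈ U)
    (h : ∀ᶠ z in 𝓝 z₀, f (s * z) = 0) : EqOn f 0 U := by
  refine hf.eqOn_zero_of_preconnected_of_eventuallyEq_zero hU hz₀ ?_
  have hdiv : Tendsto (fun w ↦ w / s) (𝓝 (s * z₀)) (𝓝 z₀) := by
    simpa [hs] using (continuous_id.div_const s).tendsto (s * z₀)
  filter_upwards [hdiv.eventually h] with w hw
  simpa [mul_div_cancel₀ _ hs] using hw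

section Orbit

variable {q σ ℓ B A : ℝ} {α : ℂ} {Ω K : Set ℂ} {x₀ : ℂ} {u : ℂ → ℂ}

theorem IsPantographSolution.norm_orbit_sub_le (hu : IsPantographSolution q α Ω u)
    (hK : HasMeanValueBound ℂ K x₀ ℓ) (hKΩ : ∀ k : ℕ, ∀ z ∈ K, (σ * q ^ k * z : ℂ) ∈ Ω)
    (hσ : 0 ≤ σ) (hq : 0 ≤ q) (hB : ∀ k : ℕ, ∀ z ∈ K, ‖u (σ * q ^ k * z)‖ ≤ B) (k : ℕ) {z : ℂ}
    (hz : z ∈ K) :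
    ‖u (σ * q ^ k * z) - u (σ * q ^ k * x₀)‖ ≤ σ * (‖α‖ + 1) * B * ℓ * q ^ k := by
  have hs : ‖(σ * q ^ k : ℂ)‖ = σ * q ^ k := by
    norm_cast
    exact Real.norm_of_nonneg (by positivity)
  have hshift : ∀ w : ℂ, q * (σ * q ^ k * w) = σ * q ^ (k + 1) * w := fun w ↦ by ring
  have hderiv : ∀ w ∈ K, HasDerivAt (fun w ↦ u (σ * q ^ k * w))
      ((α * u (q * (σ * q ^ k * w)) - u (σ * q ^ k * w)) * (σ * q ^ k)) w := fun w hw ↦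
    (hu _ (hKΩ k w hw)).comp w (hasDerivAt_const_mul _)
  have hbound : ∀ w ∈ K, ‖(α * u (q * (σ * q ^ k * w)) - u (σ * q ^ k * w)) * (σ * q ^ k)‖ ≤
      σ * q ^ k * ((‖α‖ + 1) * B) := fun w hw ↦ by
    rw [norm_mul, hs, mul_comm, hshift]
    refine mul_le_mul_of_nonneg_left ((norm_sub_le _ _).trans ?_) (by positivity)
    rw [norm_mul]
    nlinarith [hB (k + 1) w hw, hB k w hw, norm_nonneg α, norm_nonneg (u (σ * q ^ (k + 1) * w))]
  calc ‖u (σ * q ^ k * z) - u (σ * q ^ k * x₀)‖ ≤ σ * q ^ k * ((‖α‖ + 1) * B) * ℓ :=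
        hK _ _ _ hderiv hbound z hz
    _ = σ * (‖α‖ + 1) * B * ℓ * q ^ k := by ring

theorem IsPantographSolution.dist_orbit_le (hu : IsPantographSolution q α Ω u)
    (hK : HasMeanValueBound ℂ K x₀ ℓ) (hqx₀ : q * x₀ ∈ K)
    (hKΩ : ∀ k : ℕ, ∀ z ∈ K, (σ * q ^ k * z : ℂ) ∈ Ω) (hσ : 0 ≤ σ) (hq : 0 ≤ q)
    (hB : ∀ k : ℕ, ∀ z ∈ K, ‖u (σ * q ^ k * z)‖ ≤ B) (k : ℕ) :
    dist (u (σ * q ^ k * x₀)) (u (σ * q ^ (k + 1) * x₀)) ≤ σ * (‖α‖ + 1) * B * ℓ * q ^ k := by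
  have h := hu.norm_orbit_sub_le hK hKΩ hσ hq hB k hqx₀
  rwa [dist_comm, dist_eq_norm, show (σ * q ^ (k + 1) * x₀ : ℂ) = σ * q ^ k * (q * x₀) by ring]

theorem IsPantographSolution.exists_tendsto_orbit (hu : IsPantographSolution q α Ω u)
    (hK : HasMeanValueBound ℂ K x₀ ℓ) (hqx₀ : q * x₀ ∈ K)
    (hKΩ : ∀ k : ℕ, ∀ z ∈ K, (σ * q ^ k * z : ℂ) ∈ Ω) (hσ : 0 ≤ σ) (hq0 : 0 ≤ q) (hq1 : q < 1)
    (hB : ∀ k : ℕ, ∀ z ∈ K, ‖u (σ * q ^ k * z)‖ ≤ B) :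
    ∃ c, Tendsto (fun k : ℕ ↦ u (σ * q ^ k * x₀)) atTop (𝓝 c) :=
  cauchySeq_tendsto_of_complete <|
    cauchySeq_of_le_geometric q _ hq1 (hu.dist_orbit_le hK hqx₀ hKΩ hσ hq0 hB)

theorem IsPantographSolution.norm_orbit_le_of_tendsto_zero (hu : IsPantographSolution q α Ω u)
    (hK : HasMeanValueBound ℂ K x₀ ℓ) (hℓ : 0 ≤ ℓ) (hx₀ : x₀ ∈ K) (hqx₀ : q * x₀ ∈ K)
    (hKΩ : ∀ k : ℕ, ∀ z ∈ K, (σ * q ^ k * z : ℂ) ∈ Ω) (hσ : 0 ≤ σ) (hq0 : 0 ≤ q) (hq1 : q < 1)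
    (hlim : Tendsto (fun k : ℕ ↦ u (σ * q ^ k * x₀)) atTop (𝓝 0))
    (hB : ∀ k : ℕ, ∀ z ∈ K, ‖u (σ * q ^ k * z)‖ ≤ B) (k : ℕ) {z : ℂ} (hz : z ∈ K) :
    ‖u (σ * q ^ k * z)‖ ≤ σ * ((‖α‖ + 1) * ℓ * (1 + (1 - q)⁻¹)) * B := by
  have hB₀ : 0 ≤ B := (norm_nonneg _).trans (hB 0 x₀ hx₀)
  have hqk : q ^ k ≤ 1 := pow_le_one₀ hq0 hq1.le
  have horbit : ‖u (σ * q ^ k * x₀)‖ ≤ σ * (‖α‖ + 1) * B * ℓ * q ^ k / (1 - q) := by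
    simpa only [dist_zero_right] using
      dist_le_of_le_geometric_of_tendsto q _ hq1 (hu.dist_orbit_le hK hqx₀ hKΩ hσ hq0 hB) hlim k
  calc ‖u (σ * q ^ k * z)‖
      ≤ ‖u (σ * q ^ k * z) - u (σ * q ^ k * x₀)‖ + ‖u (σ * q ^ k * x₀)‖ := norm_le_norm_sub_add _ _
    _ ≤ σ * (‖α‖ + 1) * B * ℓ * q ^ k + σ * (‖α‖ + 1) * B * ℓ * q ^ k / (1 - q) :=
        add_le_add (hu.norm_orbit_sub_le hK hKΩ hσ hq0 hB k hz) horbit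
    _ = σ * (‖α‖ + 1) * B * ℓ * (1 + (1 - q)⁻¹) * q ^ k := by ring
    _ ≤ σ * (‖α‖ + 1) * B * ℓ * (1 + (1 - q)⁻¹) :=
        mul_le_of_le_one_right (by have := sub_pos.mpr hq1; positivity) hqk
    _ = σ * ((‖α‖ + 1) * ℓ * (1 + (1 - q)⁻¹)) * B := by ring

theorem IsPantographSolution.orbit_eq_zero (hu : IsPantographSolution q α Ω u)
    (hK : HasMeanValueBound ℂ K x₀ ℓ) (hℓ : 0 ≤ ℓ) (hx₀ : x₀ ∈ K) (hqx₀ : q * x₀ ∈ K)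
    (hKΩ : ∀ k : ℕ, ∀ z ∈ K, (σ * q ^ k * z : ℂ) ∈ Ω) (hσ : 0 ≤ σ) (hq0 : 0 ≤ q) (hq1 : q < 1)
    (hlim : Tendsto (fun k : ℕ ↦ u (σ * q ^ k * x₀)) atTop (𝓝 0))
    (hA : ∀ k : ℕ, ∀ z ∈ K, ‖u (σ * q ^ k * z)‖ ≤ A)
    (hσκ : σ * ((‖α‖ + 1) * ℓ * (1 + (1 - q)⁻¹)) < 1) {z : ℂ} (hz : z ∈ K) :
    u (σ * z) = 0 := by
  set ε := σ * ((‖α‖ + 1) * ℓ * (1 + (1 - q)⁻¹))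
  have hε : 0 ≤ ε := by have := sub_pos.mpr hq1; positivity
  have hdecay : ∀ M : ℕ, ∀ k : ℕ, ∀ z ∈ K, ‖u (σ * q ^ k * z)‖ ≤ ε ^ M * A := by
    intro M
    induction M with
    | zero => simpa using hA
    | succ M ih =>
      intro k z hz
      rw [pow_succ', mul_assoc ε]
      exact hu.norm_orbit_le_of_tendsto_zero hK hℓ hx₀ hqx₀ hKΩ hσ hq0 hq1 hlim ih k hz
  have hlim₀ : Tendsto (fun M : ℕ ↦ ε ^ M * A) atTop (𝓝 0) := by
    simpa using (tendsto_pow_atTop_nhds_zero_of_lt_one hε hσκ).mul_const A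
  have h := ge_of_tendsto hlim₀ (Eventually.of_forall fun M ↦ hdecay M 0 z hz)
  simpa using h

theorem IsPantographSolution.sub_const_mul {y E : ℂ → ℂ} (hy : IsPantographSolution q α Ω y)
    (hE : IsPantographSolution q α Ω E) (c : ℂ) :
    IsPantographSolution q α Ω fun z ↦ y z - c * E z := fun x hx ↦ by
  have h := (hy x hx).sub ((hE x hx).const_mul c)
  rw [show α * (y (q * x) - c * E (q * x)) - (y x - c * E x) =
    α * y (q * x) - y x - c * (α * E (q * x) - E x) by ring]
  exact h

theorem IsPantographSolution.differentiableOn (hu : IsPantographSolution q α Ω u) :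
    DifferentiableOn ℂ u Ω :=
  fun x hx ↦ (hu x hx).differentiableAt.differentiableWithinAt

theorem IsPantographSolution.eqOn_zero (hu : IsPantographSolution q α Ω u) (hΩ : IsOpen Ω)
    (hΩc : IsPreconnected Ω) (hK : HasMeanValueBound ℂ K x₀ ℓ) (hℓ : 0 ≤ ℓ) (hKx₀ : K ∈ 𝓝 x₀)
    (hqx₀ : q * x₀ ∈ K) (hKΩ : ∀ k : ℕ, ∀ z ∈ K, (σ * q ^ k * z : ℂ) ∈ Ω) (hσ : 0 < σ)
    (hq0 : 0 ≤ q) (hq1 : q < 1) (hlim : Tendsto (fun k : ℕ ↦ u (σ * q ^ k * x₀)) atTop (𝓝 0))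
    (hA : ∀ k : ℕ, ∀ z ∈ K, ‖u (σ * q ^ k * z)‖ ≤ A)
    (hσκ : σ * ((‖α‖ + 1) * ℓ * (1 + (1 - q)⁻¹)) < 1) :
    EqOn u 0 Ω := by
  refine (hu.differentiableOn.analyticOnNhd hΩ).eqOn_zero_of_eventually_comp_mul hΩc
    (Complex.ofReal_ne_zero.mpr hσ.ne') (by simpa using hKΩ 0 x₀ (mem_of_mem_nhds hKx₀)) ?_
  filter_upwards [hKx₀] with z hz
  exact hu.orbit_eq_zero hK hℓ (mem_of_mem_nhds hKx₀) hqx₀ hKΩ hσ.le hq0 hq1 hlim hA hσκ hz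

theorem norm_orbit_le (hσ : 0 ≤ σ) (hq0 : 0 ≤ q) (hq1 : q ≤ 1) (k : ℕ) {z : ℂ} {ρ : ℝ}
    (hz : ‖z‖ ≤ ρ) : ‖(σ * q ^ k * z : ℂ)‖ ≤ σ * ρ := by
  rw [norm_mul, norm_mul, norm_pow, Complex.norm_real, Complex.norm_real, Real.norm_of_nonneg hσ,
    Real.norm_of_nonneg hq0, mul_assoc]
  exact mul_le_mul_of_nonneg_left
    ((mul_le_of_le_one_left (norm_nonneg z) (pow_le_one₀ hq0 hq1)).trans hz) hσ

theorem IsPantographSolution.exists_eqOn_const_mul_pantographSeries {y : ℂ → ℂ}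
    (hy : IsPantographSolution q α Ω y) (hΩ : IsOpen Ω)
    (hΩc : IsPreconnected Ω) (hK : HasMeanValueBound ℂ K x₀ ℓ) (hℓ : 0 ≤ ℓ) (hKx₀ : K ∈ 𝓝 x₀)
    (hqx₀ : q * x₀ ∈ K) (hKΩ : ∀ k : ℕ, ∀ z ∈ K, (σ * q ^ k * z : ℂ) ∈ Ω) (hσ : 0 < σ)
    (hq0 : 0 ≤ q) (hq1 : q < 1) {ρ : ℝ} (hρ : ∀ z ∈ K, ‖z‖ ≤ ρ)
    (hB : ∀ k : ℕ, ∀ z ∈ K, ‖y (σ * q ^ k * z)‖ ≤ B)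
    (hσκ : σ * ((‖α‖ + 1) * ℓ * (1 + (1 - q)⁻¹)) < 1) :
    ∃ c, EqOn y (fun z ↦ c * pantographSeries q α z) Ω := by
  have hE := hasDerivAt_pantographSeries (α := α) hq0 hq1.le
  have hEc : Continuous (pantographSeries q α) := continuous_iff_continuousAt.mpr fun z ↦
    (hE z).continuousAt
  obtain ⟨M, hM⟩ := (isCompact_closedBall (0 : ℂ) (σ * ρ)).exists_bound_of_continuousOn
    hEc.continuousOn
  obtain ⟨c, hc⟩ := hy.exists_tendsto_orbit hK hqx₀ hKΩ hσ.le hq0 hq1 hB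
  have horbit : Tendsto (fun k : ℕ ↦ (σ * q ^ k * x₀ : ℂ)) atTop (𝓝 0) := by
    simpa using ((tendsto_pow_atTop_nhds_zero_of_norm_lt_one (x := (q : ℂ))
      (by simpa [abs_of_nonneg hq0] using hq1)).const_mul (σ : ℂ)).mul_const x₀
  have hlim := hc.sub (((hEc.tendsto 0).comp horbit).const_mul c)
  rw [pantographSeries_zero, mul_one, sub_self] at hlim
  have hEB : ∀ k : ℕ, ∀ z ∈ K, ‖c * pantographSeries q α (σ * q ^ k * z)‖ ≤ ‖c‖ * M :=
    fun k z hz ↦ by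
      rw [norm_mul]
      exact mul_le_mul_of_nonneg_left (hM _ (mem_closedBall_zero_iff.mpr
        (norm_orbit_le hσ.le hq0 hq1.le k (hρ z hz)))) (norm_nonneg c)
  refine ⟨c, fun x hx ↦ sub_eq_zero.mp ?_⟩
  exact (hy.sub_const_mul (fun x _ ↦ hE x) c).eqOn_zero hΩ hΩc hK hℓ hKx₀ hqx₀ hKΩ hσ hq0 hq1
    hlim (fun k z hz ↦ (norm_sub_le _ _).trans (add_le_add (hB k z hz) (hEB k z hz))) hσκ hx

end Orbit

theorem stmt0_general (q : ℝ) (hq0 : 0 < q) (hq1 : q < 1)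
    (α : ℂ)
    (Ω : Set ℂ) (hΩne : Ω.Nonempty) (hΩconn : IsConnected Ω) (hΩopen : IsOpen Ω)
    (hqΩ : ∀ x ∈ Ω, (q : ℂ) * x ∈ Ω)
    (y : ℂ → ℂ)
    (hy : ∀ x ∈ Ω, HasDerivAt y (α * y ((q : ℂ) * x) - y x) x)
    (R : ℝ) (hR : 0 < R)
    (hbdd : ∃ C : ℝ, ∀ x ∈ Ω, ‖x‖ < R → ‖y x‖ ≤ C) :
    ∃ Y : ℂ → ℂ, Differentiable ℂ Y ∧ ∀ x ∈ Ω, Y x = y x := by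
  obtain ⟨x₀, hx₀⟩ := hΩne
  obtain ⟨C, hC⟩ := hbdd
  obtain ⟨K, hKΩ, hKc, hKx₀, hqx₀, ℓ, hℓ, hK⟩ :=
    hΩopen.exists_hasMeanValueBound (F := ℂ) hΩconn.isPreconnected hx₀ (hqΩ x₀ hx₀)
  obtain ⟨ρ, hρ⟩ := hKc.isBounded.exists_norm_le
  have hqn := tendsto_pow_atTop_nhds_zero_of_lt_one hq0.le hq1
  obtain ⟨n, hnR, hnκ⟩ : ∃ n : ℕ, q ^ n * ρ < R ∧ q ^ n * ((‖α‖ + 1) * ℓ * (1 + (1 - q)⁻¹)) < 1 :=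
    (((hqn.mul_const ρ).eventually_lt_const (by simpa using hR)).and
      ((hqn.mul_const _).eventually_lt_const (by simp))).exists
  have hKΩn : ∀ k : ℕ, ∀ z ∈ K, ((q ^ n : ℝ) * q ^ k * z : ℂ) ∈ Ω := fun k z hz ↦ by
    rw [Complex.ofReal_pow, ← pow_add, ← mul_left_iterate_apply]
    exact MapsTo.iterate hqΩ (n + k) (hKΩ hz)
  obtain ⟨c, hc⟩ := IsPantographSolution.exists_eqOn_const_mul_pantographSeries hy hΩopen
    hΩconn.isPreconnected hK hℓ hKx₀ hqx₀ hKΩn (by positivity) hq0.le hq1 hρ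
    (fun k z hz ↦ hC _ (hKΩn k z hz)
      ((norm_orbit_le (by positivity) hq0.le hq1.le k (hρ z hz)).trans_lt hnR)) hnκ
  exact ⟨_, (differentiable_pantographSeries hq0.le hq1.le).const_mul c, fun x hx ↦ (hc hx).symm⟩

/-- A bounded-near-zero holomorphic solution of `y'(x) = α y(qx) - y(x)` on a
nonempty connected open set `Ω` with `qΩ ⊆ Ω` extends to an entire function. -/
theorem stmt0 (q : ℝ) (hq0 : 0 < q) (hq1 : q < 1)
    (α : ℂ) (hα : α ≠ 0)
    (Ω : Set ℂ) (hΩne : Ω.Nonempty) (hΩconn : IsConnected Ω) (hΩopen : IsOpen Ω)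
    (hqΩ : ∀ x ∈ Ω, (q : ℂ) * x ∈ Ω)
    (y : ℂ → ℂ)
    (hy : ∀ x ∈ Ω, HasDerivAt y (α * y ((q : ℂ) * x) - y x) x)
    (R : ℝ) (hR : 0 < R)
    (hbdd : ∃ C : ℝ, ∀ x ∈ Ω, ‖x‖ < R → ‖y x‖ ≤ C) :
    ∃ Y : ℂ → ℂ, Differentiable ℂ Y ∧ ∀ x ∈ Ω, Y x = y x :=
  stmt0_general q hq0 hq1 α Ω hΩne hΩconn hΩopen hqΩ y hy R hR hbdd
end

section
/- Let α ∈ ℂ, α ≠ 0, d ∈ ℝ and R > 0. Let u : ℝ → ℂ be infinitely differentiable on [0,R) and satisfy u′(t) = e^{id}·(α·u(qt) − u(t)) for all t ∈ [0,R) (i.e. y(te^{id}) := u(t) is a C^∞ solution of y′(x) = α·y(qx) − y(x) on the segment [0, R e^{id})). Then: (a) there exists an entire function Y : ℂ → ℂ satisfying Y′(x) = α·Y(qx) − Y(x) for all x ∈ ℂ and Y(t e^{id}) = u(t) for all t ∈ [0,R); (b) consequently, if u(0) = 0 then u(t) = 0 for all t ∈ [0,R). -/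
open Filter

noncomputable def acoef (α : ℂ) (q : ℝ) (c0 : ℂ) : ℕ → ℂ
  | 0 => c0
  | n+1 => (α * (q:ℂ)^n - 1) * acoef α q c0 n / ((n:ℂ)+1)

lemma acoef_rec (α : ℂ) (q : ℝ) (c0 : ℂ) (n : ℕ) :
    ((n:ℂ)+1) * acoef α q c0 (n+1) = (α * (q:ℂ)^n - 1) * acoef α q c0 n := by
  have h : ((n:ℂ)+1) ≠ 0 := Nat.cast_add_one_ne_zero n
  rw [acoef]
  field_simp

lemma acoef_fac_bound (α : ℂ) {q : ℝ} (hq0 : 0 ≤ q) (hq1 : q ≤ 1) (c0 : ℂ) (n : ℕ) :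
    ‖α * (q:ℂ)^n - 1‖ ≤ ‖α‖ + 1 := by
  refine (norm_sub_le _ _).trans ?_
  have h1 : ‖α * (q:ℂ)^n‖ ≤ ‖α‖ := by
    rw [norm_mul, norm_pow, Complex.norm_real, Real.norm_of_nonneg hq0]
    calc ‖α‖ * q ^ n ≤ ‖α‖ * 1 := by
          gcongr
          exact pow_le_one₀ hq0 hq1
      _ = ‖α‖ := mul_one _
  simpa using h1

lemma acoef_bound (α : ℂ) {q : ℝ} (hq0 : 0 ≤ q) (hq1 : q ≤ 1) (c0 : ℂ) (n : ℕ) :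
    ‖acoef α q c0 n‖ ≤ ‖c0‖ * ((‖α‖+1)^n / n.factorial) := by
  induction n with
  | zero => simp [acoef]
  | succ n ih =>
    have hrec := acoef_rec α q c0 n
    have hcast : ‖((n:ℂ)+1)‖ = ((n:ℝ)+1) := by
      have h1 : ((n:ℂ)+1) = ((n+1 : ℕ) : ℂ) := by push_cast; ring
      rw [h1, Complex.norm_natCast]; push_cast; ring
    have hnorm : ((n:ℝ)+1) * ‖acoef α q c0 (n+1)‖ = ‖α * (q:ℂ)^n - 1‖ * ‖acoef α q c0 n‖ := by
      have h := congrArg norm hrec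
      rw [norm_mul, norm_mul, hcast] at h
      exact h
    have hpos : (0:ℝ) < (n:ℝ)+1 := by positivity
    have h2 : ((n:ℝ)+1) * ‖acoef α q c0 (n+1)‖ ≤ (‖α‖+1) * (‖c0‖ * ((‖α‖+1)^n / n.factorial)) := by
      rw [hnorm]
      have := acoef_fac_bound α hq0 hq1 c0 n
      gcongr
    have h3 : ‖acoef α q c0 (n+1)‖ ≤ (‖α‖+1) * (‖c0‖ * ((‖α‖+1)^n / n.factorial)) / ((n:ℝ)+1) := by
      rw [le_div_iff₀ hpos]
      linarith [h2]
    refine h3.trans_eq ?_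
    have hfac : (((n+1).factorial : ℝ)) = ((n:ℝ)+1) * n.factorial := by
      rw [Nat.factorial_succ]; push_cast; ring
    have hn : ((n.factorial : ℝ)) ≠ 0 := by positivity
    rw [hfac]
    field_simp
    ring

lemma summable_acoef_norm (α : ℂ) {q : ℝ} (hq0 : 0 ≤ q) (hq1 : q ≤ 1) (c0 : ℂ) {r : ℝ}
    (hr : 0 ≤ r) : Summable fun n => ‖acoef α q c0 n‖ * r ^ n := by
  refine Summable.of_nonneg_of_le (fun n => by positivity) (fun n => ?_)
    ((Real.summable_pow_div_factorial ((‖α‖+1)*r)).mul_left ‖c0‖)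
  · calc ‖acoef α q c0 n‖ * r ^ n ≤ (‖c0‖ * ((‖α‖+1)^n / n.factorial)) * r ^ n := by
          gcongr
          exact acoef_bound α hq0 hq1 c0 n
      _ = ‖c0‖ * (((‖α‖+1)*r) ^ n / n.factorial) := by rw [mul_pow]; ring

lemma summable_acoef (α : ℂ) {q : ℝ} (hq0 : 0 ≤ q) (hq1 : q ≤ 1) (c0 : ℂ) (y : ℂ) :
    Summable fun n => acoef α q c0 n * y ^ n := by
  apply Summable.of_norm
  have := summable_acoef_norm α hq0 hq1 c0 (norm_nonneg y)
  simpa [norm_mul, norm_pow] using this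

lemma hasDerivAt_series (α : ℂ) {q : ℝ} (hq0 : 0 ≤ q) (hq1 : q ≤ 1) (c0 : ℂ) (x : ℂ) :
    HasDerivAt (fun z => ∑' n, acoef α q c0 n * z ^ n)
      (α * (∑' n, acoef α q c0 n * ((q:ℂ)*x) ^ n) - ∑' n, acoef α q c0 n * x ^ n) x := by
  set a : ℕ → ℂ := acoef α q c0 with ha
  set r : ℝ := ‖x‖ + 1 with hr
  have hr0 : 0 ≤ r := by positivity
  set u : ℕ → ℝ := fun n => ‖a n‖ * (n * r ^ (n-1)) with hu
  have husum : Summable u := by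
    rw [← summable_nat_add_iff 1]
    refine Summable.of_nonneg_of_le (fun n => by positivity) (fun n => ?_)
      (((summable_acoef_norm α hq0 hq1 c0 hr0).mul_left (‖α‖+1)))
    · 
      have h1 : u (n+1) = (((n:ℝ)+1) * ‖a (n+1)‖) * r ^ n := by
        rw [hu]; push_cast; ring_nf
      rw [h1]
      have hcast : ‖((n:ℂ)+1)‖ = ((n:ℝ)+1) := by
        have h1 : ((n:ℂ)+1) = ((n+1 : ℕ) : ℂ) := by push_cast; ring
        rw [h1, Complex.norm_natCast]; push_cast; ring
      have h2 : ((n:ℝ)+1) * ‖a (n+1)‖ = ‖α * (q:ℂ)^n - 1‖ * ‖a n‖ := by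
        have h := congrArg norm (acoef_rec α q c0 n)
        rw [norm_mul, norm_mul, hcast] at h
        exact h
      rw [h2]
      have := acoef_fac_bound α hq0 hq1 c0 n
      calc ‖α * (q:ℂ)^n - 1‖ * ‖a n‖ * r ^ n ≤ (‖α‖+1) * ‖a n‖ * r ^ n := by
            gcongr
        _ = (‖α‖+1) * (‖a n‖ * r ^ n) := by ring
  have hbound : ∀ (n : ℕ), ∀ y ∈ Metric.ball (0:ℂ) r, ‖a n * ((n:ℂ) * y ^ (n-1))‖ ≤ u n := by
    intro n y hy
    have hyr : ‖y‖ ≤ r := by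
      rw [Metric.mem_ball, dist_zero_right] at hy
      exact hy.le
    simp only [hu]
    rw [norm_mul, norm_mul, norm_pow, Complex.norm_natCast]
    gcongr
  have hf' : TendstoUniformlyOn
      (fun (t : Finset ℕ) y => ∑ n ∈ t, a n * ((n:ℂ) * y ^ (n-1)))
      (fun y => ∑' n, a n * ((n:ℂ) * y ^ (n-1))) atTop (Metric.ball (0:ℂ) r) :=
    tendstoUniformlyOn_tsum husum hbound
  have hf : ∀ (t : Finset ℕ), ∀ y ∈ Metric.ball (0:ℂ) r,
      HasDerivAt (fun z => ∑ n ∈ t, a n * z ^ n) (∑ n ∈ t, a n * ((n:ℂ) * y ^ (n-1))) y := by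
    intro t y _
    exact HasDerivAt.fun_sum fun n _ => (hasDerivAt_pow n y).const_mul (a n)
  have hfg : ∀ y ∈ Metric.ball (0:ℂ) r,
      Tendsto (fun t : Finset ℕ => ∑ n ∈ t, a n * y ^ n) atTop (nhds (∑' n, a n * y ^ n)) := by
    intro y _
    exact (summable_acoef α hq0 hq1 c0 y).hasSum
  have hxmem : x ∈ Metric.ball (0:ℂ) r := by
    rw [Metric.mem_ball, dist_zero_right, hr]
    exact lt_add_one _
  have hmain := hasDerivAt_of_tendstoUniformlyOn Metric.isOpen_ball hf' (Filter.Eventually.of_forall hf) hfg hxmem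
  have hsum1 : Summable fun n => a n * ((n:ℂ) * x ^ (n-1)) :=
    Summable.of_norm_bounded husum (fun n => hbound n x hxmem)
  have hgx : (∑' n, a n * ((n:ℂ) * x ^ (n-1)))
      = α * (∑' n, a n * ((q:ℂ)*x) ^ n) - ∑' n, a n * x ^ n := by
    rw [hsum1.tsum_eq_zero_add]
    have h0 : a 0 * ((0:ℕ) * x ^ (0-1)) = 0 := by simp
    rw [h0, zero_add]
    have hcongr : ∀ n : ℕ, a (n+1) * (((n+1:ℕ):ℂ) * x ^ ((n+1)-1))
        = α * (a n * ((q:ℂ)*x) ^ n) - a n * x ^ n := by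
      intro n
      have : (((n+1:ℕ):ℂ)) = ((n:ℂ)+1) := by push_cast; ring
      rw [Nat.add_sub_cancel, this]
      have h2 : a (n+1) * (((n:ℂ)+1) * x ^ n) = (((n:ℂ)+1) * a (n+1)) * x ^ n := by ring
      rw [h2, ha, acoef_rec]
      rw [mul_pow]
      push_cast
      ring
    rw [tsum_congr hcongr]
    rw [Summable.tsum_sub (((summable_acoef α hq0 hq1 c0 ((q:ℂ)*x))).mul_left α)
      (summable_acoef α hq0 hq1 c0 x)]
    rw [tsum_mul_left]
  rw [hgx] at hmain
  exact hmain


private lemma arith1 (K C s : ℝ) (n : ℕ) :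
    (K * C ^ (n+1) / n.factorial) * ((s ^ (n+1) - 0 ^ (n+1)) / ((n:ℝ)+1))
      = K * (C * s) ^ (n+1) / (n+1).factorial := by
  have hn : ((n.factorial : ℝ)) ≠ 0 := by positivity
  have h1 : (((n+1).factorial : ℝ)) = ((n:ℝ)+1) * n.factorial := by
    rw [Nat.factorial_succ]; push_cast; ring
  rw [h1, mul_pow, zero_pow (by omega), sub_zero]
  field_simp

open Set intervalIntegral in
lemma vanish (q : ℝ) (hq0 : 0 ≤ q) (hq1 : q ≤ 1) (c α : ℂ) (R : ℝ)
    (v : ℝ → ℂ) (hcont : ContinuousOn v (Set.Ico 0 R))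
    (hd : ∀ t ∈ Set.Ico (0:ℝ) R,
      HasDerivWithinAt v (c * (α * v (q * t) - v t)) (Set.Ico 0 R) t)
    (h0 : v 0 = 0) : ∀ t ∈ Set.Ico (0:ℝ) R, v t = 0 := by
  intro T hT
  obtain ⟨hT0, hTR⟩ := hT
  have hsub : Icc 0 T ⊆ Ico 0 R := fun s hs => ⟨hs.1, lt_of_le_of_lt hs.2 hTR⟩
  have hqmem : ∀ s ∈ Icc (0:ℝ) T, q * s ∈ Icc (0:ℝ) T := by
    intro s hs
    exact ⟨mul_nonneg hq0 hs.1, by nlinarith [hs.1, hs.2]⟩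
  have hvc : ContinuousOn v (Icc 0 T) := hcont.mono hsub
  obtain ⟨K₀, hK₀⟩ := isCompact_Icc.exists_bound_of_continuousOn hvc
  set K : ℝ := max K₀ 0 with hKdef
  have hK : ∀ s ∈ Icc (0:ℝ) T, ‖v s‖ ≤ K := fun s hs => (hK₀ s hs).trans (le_max_left _ _)
  have hK0 : 0 ≤ K := le_max_right _ _
  set C : ℝ := ‖c‖ * (‖α‖ + 1) with hCdef
  have hC0 : 0 ≤ C := by positivity
  set f' : ℝ → ℂ := fun s => c * (α * v (q * s) - v s) with hf'def
  have hf'c : ContinuousOn f' (Icc 0 T) := by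
    apply continuousOn_const.mul
    apply ContinuousOn.sub _ hvc
    apply continuousOn_const.mul
    exact hvc.comp ((continuous_const.mul continuous_id).continuousOn) hqmem
  have key : ∀ s ∈ Icc (0:ℝ) T, v s = ∫ τ in (0:ℝ)..s, f' τ := by
    intro s hs
    have h1 : ∫ τ in (0:ℝ)..s, f' τ = v s - v 0 := by
      apply integral_eq_sub_of_hasDeriv_right_of_le hs.1
        (hvc.mono (Icc_subset_Icc le_rfl hs.2))
      · intro x hx
        have hxm : x ∈ Ico (0:ℝ) R := ⟨hx.1.le, lt_of_lt_of_le hx.2 (hs.2.trans hTR.le)⟩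
        have := (hd x hxm).hasDerivAt (Filter.mem_of_superset
          ((isOpen_Ioo (a := (0:ℝ)) (b := R)).mem_nhds ⟨hx.1, hxm.2⟩) Ioo_subset_Ico_self)
        exact this.hasDerivWithinAt
      · exact (hf'c.mono (by rw [uIcc_of_le hs.1]; exact Icc_subset_Icc le_rfl hs.2)).intervalIntegrable
    rw [h1, h0, sub_zero]
  have bound : ∀ n : ℕ, ∀ s ∈ Icc (0:ℝ) T, ‖v s‖ ≤ K * (C * s) ^ n / n.factorial := by
    intro n
    induction n with
    | zero => intro s hs; simpa using hK s hs
    | succ n ih =>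
      intro s hs
      rw [key s hs]
      have hIccsub : Icc (0:ℝ) s ⊆ Icc 0 T := Icc_subset_Icc le_rfl hs.2
      have hb : ∀ τ ∈ Icc (0:ℝ) s, ‖f' τ‖ ≤ (K * C ^ (n+1) / n.factorial) * τ ^ n := by
        intro τ hτ
        have hτm : τ ∈ Icc (0:ℝ) T := hIccsub hτ
        have h1 := ih τ hτm
        have h2 := ih (q * τ) (hqmem τ hτm)
        have hqτ : (C * (q * τ)) ^ n ≤ (C * τ) ^ n := by
          apply pow_le_pow_left₀ (mul_nonneg hC0 (mul_nonneg hq0 hτ.1))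
          nlinarith [mul_nonneg (mul_nonneg hC0 hτ.1) (sub_nonneg.2 hq1)]
        have h2' : ‖v (q * τ)‖ ≤ K * (C * τ) ^ n / n.factorial := by
          refine h2.trans ?_
          gcongr
        calc ‖f' τ‖ = ‖c‖ * ‖α * v (q * τ) - v τ‖ := by rw [hf'def]; simp [norm_mul]
          _ ≤ ‖c‖ * (‖α‖ * ‖v (q * τ)‖ + ‖v τ‖) := by
              gcongr
              exact (norm_sub_le _ _).trans (by rw [norm_mul])
          _ ≤ ‖c‖ * (‖α‖ * (K * (C * τ) ^ n / n.factorial) + K * (C * τ) ^ n / n.factorial) := by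
              gcongr
          _ = C * (K * (C * τ) ^ n / n.factorial) := by rw [hCdef]; ring
          _ = (K * C ^ (n+1) / n.factorial) * τ ^ n := by rw [mul_pow]; ring
      have hint1 : IntervalIntegrable (fun τ => ‖f' τ‖) MeasureTheory.volume 0 s := by
        apply ContinuousOn.intervalIntegrable
        apply ContinuousOn.norm
        exact hf'c.mono (by rw [uIcc_of_le hs.1]; exact hIccsub)
      have hint2 : IntervalIntegrable (fun τ => (K * C ^ (n+1) / n.factorial) * τ ^ n)
          MeasureTheory.volume 0 s :=
        (continuous_const.mul (continuous_pow n)).intervalIntegrable _ _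
      calc ‖∫ τ in (0:ℝ)..s, f' τ‖ ≤ ∫ τ in (0:ℝ)..s, ‖f' τ‖ :=
            norm_integral_le_integral_norm hs.1
        _ ≤ ∫ τ in (0:ℝ)..s, (K * C ^ (n+1) / n.factorial) * τ ^ n := by
            apply integral_mono_on hs.1 hint1 hint2 hb
        _ = (K * C ^ (n+1) / n.factorial) * ((s ^ (n+1) - 0 ^ (n+1)) / ((n:ℝ)+1)) := by
            rw [integral_const_mul, integral_pow]
        _ = K * (C * s) ^ (n+1) / (n+1).factorial := arith1 K C s n
  have hlim : Filter.Tendsto (fun n : ℕ => K * (C * T) ^ n / n.factorial)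
      Filter.atTop (nhds 0) := by
    have := (FloorSemiring.tendsto_pow_div_factorial_atTop (K := ℝ) (C * T)).const_mul K
    simpa [mul_div_assoc] using this
  have hle : ‖v T‖ ≤ 0 := ge_of_tendsto' hlim (fun n => bound n T ⟨hT0, le_rfl⟩)
  simpa using norm_le_zero_iff.1 hle

/-- every `C^∞` solution of `y'(x) = α y(qx) - y(x)` on a segment `[0, R e^{id})`
extends to an entire solution; consequently a solution vanishing at `0` vanishes identically. -/
theorem stmt1 (q : ℝ) (hq0 : 0 < q) (hq1 : q < 1)
    (α : ℂ) (hα : α ≠ 0) (d R : ℝ) (hR : 0 < R)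
    (u : ℝ → ℂ)
    (hu : ContDiffOn ℝ (⊤ : ℕ∞) u (Set.Ico 0 R))
    (hde : ∀ t ∈ Set.Ico (0 : ℝ) R,
      HasDerivWithinAt u
        (Complex.exp (Complex.I * d) * (α * u (q * t) - u t)) (Set.Ico 0 R) t) :
    (∃ Y : ℂ → ℂ, Differentiable ℂ Y ∧
        (∀ x : ℂ, deriv Y x = α * Y ((q : ℂ) * x) - Y x) ∧
        (∀ t ∈ Set.Ico (0 : ℝ) R, Y ((t : ℂ) * Complex.exp (Complex.I * d)) = u t)) ∧
    (u 0 = 0 → ∀ t ∈ Set.Ico (0 : ℝ) R, u t = 0) := by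
  have hq0' : (0:ℝ) ≤ q := hq0.le
  have hq1' : q ≤ 1 := hq1.le
  set c : ℂ := Complex.exp (Complex.I * d) with hc
  set Y : ℂ → ℂ := fun x => ∑' n, acoef α q (u 0) n * x ^ n with hY
  have hD : ∀ x : ℂ, HasDerivAt Y (α * Y ((q:ℂ)*x) - Y x) x :=
    fun x => hasDerivAt_series α hq0' hq1' (u 0) x
  have hYdiff : Differentiable ℂ Y := fun x => (hD x).differentiableAt
  have hY0 : Y 0 = u 0 := by
    rw [hY]
    simp only
    rw [tsum_eq_single 0 (fun n hn => by simp [zero_pow hn])]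
    simp [acoef]
  set w : ℝ → ℂ := fun t => Y ((t:ℂ) * c) with hw
  have hwD : ∀ t : ℝ, HasDerivAt w (c * (α * w (q * t) - w t)) t := by
    intro t
    have h1 : HasDerivAt (fun s : ℝ => (s:ℂ) * c) c t := by
      simpa [Complex.real_smul] using (hasDerivAt_id t).smul_const c
    have h2 := (hD ((t:ℂ) * c)).scomp t h1
    have h3 : (q:ℂ) * ((t:ℂ) * c) = (((q*t : ℝ)):ℂ) * c := by push_cast; ring
    simp only [hw, Function.comp_def, smul_eq_mul, h3] at h2 ⊢
    exact h2
  have hwcont : Continuous w := by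
    exact hYdiff.continuous.comp (by continuity)
  set v : ℝ → ℂ := fun t => u t - w t with hv
  have hvd : ∀ t ∈ Set.Ico (0:ℝ) R,
      HasDerivWithinAt v (c * (α * v (q * t) - v t)) (Set.Ico 0 R) t := by
    intro t ht
    have h := (hde t ht).fun_sub ((hwD t).hasDerivWithinAt)
    refine h.congr_deriv ?_
    ring
  have hv0 : v 0 = 0 := by
    simp only [hv, hw]
    rw [show ((0:ℝ):ℂ) * c = 0 by simp, hY0]
    simp
  have hvcont : ContinuousOn v (Set.Ico 0 R) :=
    (hu.continuousOn).sub hwcont.continuousOn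
  have heq := vanish q hq0' hq1' c α R v hvcont hvd hv0
  constructor
  · refine ⟨Y, hYdiff, fun x => (hD x).deriv, fun t ht => ?_⟩
    have h := heq t ht
    simp only [hv, hw] at h
    exact (sub_eq_zero.mp h).symm
  · intro hu0
    exact vanish q hq0' hq1' c α R u hu.continuousOn hde hu0
end

section
/- Let μ ∈ ℂ, α := q^μ, d ∈ ℝ and R > 0. If u : ℝ → ℂ is infinitely differentiable on [0,R), satisfies u′(t) = e^{id}·(α·u(qt) − u(t)) for all t ∈ [0,R), and u(0) = 1, then u(t) = F(μ;q, t e^{id}) for all t ∈ [0,R). In particular such a solution is unique. -/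
/-- `(a;c)_n = ∏_{j=0}^{n-1} (1 - a c^j)`. -/
noncomputable def qPoch (a c : ℂ) (n : ℕ) : ℂ := ∏ j ∈ Finset.range n, (1 - a * c ^ j)

/-- `(a;c)_∞ = ∏_{j=0}^{∞} (1 - a c^j)`. -/
noncomputable def qPochInf (a c : ℂ) : ℂ := ∏' j : ℕ, (1 - a * c ^ j)

/-- `q^μ := exp (μ log q)` for real `q > 0` and complex `μ`. -/
noncomputable def qpow (q : ℝ) (μ : ℂ) : ℂ := Complex.exp (μ * Real.log q)

/-- `F(μ;q,x) = Σ_{n≥0} ((q^μ;q)_n / n!) (-x)^n`. -/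
noncomputable def F (μ : ℂ) (q : ℝ) (x : ℂ) : ℂ :=
  ∑' n : ℕ, qPoch (qpow q μ) (q : ℂ) n / (Nat.factorial n : ℂ) * (-x) ^ n

/-- `(a)_n = a (a+1) ⋯ (a+n-1)`. -/
noncomputable def poch (a : ℂ) (n : ℕ) : ℂ := ∏ j ∈ Finset.range n, (a + (j : ℂ))

/-- `G(a;q,x) = Σ_{n≥0} ((a)_n q^{n(n+1)/2} / (q;q)_n) (-x)^n`. -/
noncomputable def G (a : ℂ) (q : ℝ) (x : ℂ) : ℂ :=
  ∑' n : ℕ, poch a n * (q : ℂ) ^ (n * (n + 1) / 2) / qPoch (q : ℂ) (q : ℂ) n * (-x) ^ n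

open Set Finset intervalIntegral MeasureTheory

/-- Auxiliary: summability of a power series whose coefficients are bounded by `C^n/n!`. -/
theorem auxSummable (a : ℕ → ℂ) (C : ℝ) (ha : ∀ n, ‖a n‖ ≤ C ^ n / n.factorial)
    (w : ℂ) : Summable fun n => a n * w ^ n := by
  refine Summable.of_norm_bounded (g := fun n => (C * ‖w‖) ^ n / n.factorial)
    (Real.summable_pow_div_factorial (C * ‖w‖)) fun n => ?_
  show ‖a n * w ^ n‖ ≤ (C * ‖w‖) ^ n / n.factorial
  rw [norm_mul, norm_pow, mul_pow]
  calc ‖a n‖ * ‖w‖ ^ n ≤ (C ^ n / n.factorial) * ‖w‖ ^ n :=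
        mul_le_mul_of_nonneg_right (ha n) (by positivity)
    _ = C ^ n * ‖w‖ ^ n / n.factorial := by ring

/-- Auxiliary: the power series with coefficients satisfying the `q`-recurrence solves the
`q`-difference-differential equation. -/
theorem auxDeriv (a : ℕ → ℂ) (C : ℝ) (hC : 0 ≤ C) (ha : ∀ n, ‖a n‖ ≤ C ^ n / n.factorial)
    (q : ℝ) (E α : ℂ)
    (hrec : ∀ n : ℕ, ((n : ℂ) + 1) * a (n + 1) = E * (α * (q : ℂ) ^ n - 1) * a n)
    (R : ℝ) (hR : 0 < R) (z : ℂ) (hz : ‖z‖ < R) :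
    HasDerivAt (fun w => ∑' n, a n * w ^ n)
      (E * (α * (∑' n, a n * ((q : ℂ) * z) ^ n) - ∑' n, a n * z ^ n)) z := by
  set u : ℕ → ℝ := fun n => (n : ℝ) * (C ^ n / n.factorial) * R ^ (n - 1) with hu
  have hu_sum : Summable u := by
    rw [← summable_nat_add_iff 1]
    have : (fun m => u (m + 1)) = fun m => C * ((C * R) ^ m / m.factorial) := by
      funext m
      simp only [hu, Nat.add_sub_cancel, Nat.factorial_succ, Nat.cast_mul, Nat.cast_add,
        Nat.cast_one, mul_pow, pow_succ]
      have hm : ((m : ℝ) + 1) ≠ 0 := by positivity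
      field_simp
    rw [this]
    exact (Real.summable_pow_div_factorial (C * R)).mul_left C
  have hbnd : ∀ (n : ℕ) (y : ℂ), y ∈ Metric.ball (0 : ℂ) R →
      ‖a n * ((n : ℂ) * y ^ (n - 1))‖ ≤ u n := by
    intro n y hy
    rcases n with _ | m
    · simp [u]
    · have hyR : ‖y‖ ≤ R := by rw [mem_ball_zero_iff] at hy; exact hy.le
      simp only [u, norm_mul, norm_pow, Nat.add_sub_cancel, Complex.norm_natCast]
      push_cast
      calc ‖a (m+1)‖ * (((m:ℝ) + 1) * ‖y‖ ^ m)
          ≤ (C ^ (m+1) / (m+1).factorial) * (((m:ℝ) + 1) * R ^ m) := by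
            apply mul_le_mul (ha _)
            · exact mul_le_mul_of_nonneg_left
                (pow_le_pow_left₀ (norm_nonneg _) hyR m) (by positivity)
            · positivity
            · positivity
        _ = ((m:ℝ)+1) * (C ^ (m+1) / (m+1).factorial) * R ^ m := by ring
  have key := hasDerivAt_tsum_of_isPreconnected (g := fun n w => a n * w ^ n)
    (g' := fun n w => a n * ((n : ℂ) * w ^ (n - 1))) hu_sum
    (Metric.isOpen_ball (x := (0:ℂ)) (ε := R)) ((convex_ball (0:ℂ) R).isPreconnected)
    (fun n y _ => (hasDerivAt_pow n y).const_mul (a n))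
    (fun n y hy => hbnd n y hy)
    (Metric.mem_ball_self hR)
    (auxSummable a C ha 0)
    (mem_ball_zero_iff.2 hz)
  have hd_sum : Summable fun n => a n * ((n : ℂ) * z ^ (n - 1)) :=
    Summable.of_norm_bounded hu_sum fun n => hbnd n z (mem_ball_zero_iff.2 hz)
  have e1 : (∑' n, a n * ((n : ℂ) * z ^ (n - 1)))
      = E * (α * (∑' n, a n * ((q : ℂ) * z) ^ n) - ∑' n, a n * z ^ n) := by
    rw [hd_sum.tsum_eq_zero_add]
    have h0 : a 0 * (((0:ℕ) : ℂ) * z ^ (0 - 1)) = 0 := by simp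
    rw [h0, zero_add]
    have e2 : ∀ m : ℕ, a (m + 1) * (((m + 1 : ℕ) : ℂ) * z ^ (m + 1 - 1))
        = E * α * (a m * ((q : ℂ) * z) ^ m) - E * (a m * z ^ m) := by
      intro m
      have h := hrec m
      have : a (m + 1) * (((m + 1 : ℕ) : ℂ) * z ^ (m + 1 - 1))
          = (((m : ℂ) + 1) * a (m + 1)) * z ^ m := by push_cast; ring
      rw [this, h, mul_pow]
      ring
    calc (∑' m : ℕ, a (m + 1) * (((m + 1 : ℕ) : ℂ) * z ^ (m + 1 - 1)))
        = ∑' m : ℕ, (E * α * (a m * ((q : ℂ) * z) ^ m) - E * (a m * z ^ m)) :=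
          tsum_congr e2
      _ = E * α * (∑' m, a m * ((q : ℂ) * z) ^ m) - E * (∑' m, a m * z ^ m) := by
          rw [Summable.tsum_sub ((auxSummable a C ha _).mul_left _)
            ((auxSummable a C ha _).mul_left _), tsum_mul_left, tsum_mul_left]
      _ = E * (α * (∑' m, a m * ((q : ℂ) * z) ^ m) - ∑' m, a m * z ^ m) := by ring
  rw [← e1]
  exact key

/-- Auxiliary: Grönwall-type uniqueness for the `q`-difference-differential equation. -/
theorem auxUnique (R q : ℝ) (hq0 : 0 < q) (hq1 : q < 1)
    (E α : ℂ) (hE : ‖E‖ = 1) (v : ℝ → ℂ)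
    (hv : ∀ t ∈ Set.Ico (0:ℝ) R,
      HasDerivWithinAt v (E * (α * v (q * t) - v t)) (Set.Ico 0 R) t)
    (hv0 : v 0 = 0) : ∀ t ∈ Set.Ico (0:ℝ) R, v t = 0 := by
  have hcont : ContinuousOn v (Set.Ico 0 R) := fun s hs => (hv s hs).continuousWithinAt
  rintro t ⟨ht0, htR⟩
  have hsub : Icc (0:ℝ) t ⊆ Ico 0 R := fun s hs => ⟨hs.1, lt_of_le_of_lt hs.2 htR⟩
  obtain ⟨M, hM⟩ := isCompact_Icc.exists_bound_of_continuousOn (hcont.mono hsub)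
  have hM0 : 0 ≤ M := (norm_nonneg _).trans (hM 0 ⟨le_refl _, ht0⟩)
  set C : ℝ := ‖α‖ + 1 with hCdef
  have hC0 : 0 ≤ C := by positivity
  set D : ℝ → ℂ := fun x => E * (α * v (q * x) - v x) with hD
  have hmaps : ∀ s ∈ Icc (0:ℝ) t, q * s ∈ Icc (0:ℝ) t := by
    intro s hs
    constructor
    · exact mul_nonneg hq0.le hs.1
    · exact (mul_le_of_le_one_left hs.1 hq1.le).trans hs.2
  have hDcont : ContinuousOn D (Icc 0 t) := by
    have h1 : ContinuousOn (fun x => v (q * x)) (Icc 0 t) := by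
      apply (hcont.mono hsub).comp ((continuous_const.mul continuous_id).continuousOn)
      intro s hs
      exact hmaps s hs
    exact (continuousOn_const.mul ((continuousOn_const.mul h1).sub
      ((hcont.mono hsub))))
  have claim : ∀ n : ℕ, ∀ s ∈ Icc (0:ℝ) t, ‖v s‖ ≤ M * (C * s) ^ n / n.factorial := by
    intro n
    induction n with
    | zero => intro s hs; simpa using hM s hs
    | succ n IH =>
      intro s hs
      have hs0 : (0:ℝ) ≤ s := hs.1
      have hsubs : Icc (0:ℝ) s ⊆ Icc (0:ℝ) t := Icc_subset_Icc (le_refl _) hs.2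
      have hderiv : ∀ x ∈ Ioo (0:ℝ) s, HasDerivWithinAt v (D x) (Ioi x) x := by
        intro x hx
        have hxm : x ∈ Ico (0:ℝ) R := hsub (hsubs ⟨hx.1.le, hx.2.le⟩)
        have : HasDerivAt v (D x) x := by
          apply (hv x hxm).hasDerivAt
          exact Ico_mem_nhds (by exact hx.1) (by exact hxm.2)
        exact this.hasDerivWithinAt
      have hint : IntervalIntegrable D volume 0 s :=
        (hDcont.mono hsubs).intervalIntegrable_of_Icc hs0
      have hftc : ∫ x in (0:ℝ)..s, D x = v s - v 0 :=
        integral_eq_sub_of_hasDeriv_right_of_le hs0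
          ((hcont.mono hsub).mono hsubs) hderiv hint
      have hvs : v s = ∫ x in (0:ℝ)..s, D x := by rw [hftc, hv0, sub_zero]
      have hptwise : ∀ x ∈ Set.uIoc (0:ℝ) s, ‖D x‖ ≤ M * C ^ (n+1) / n.factorial * x ^ n := by
        intro x hx
        rw [uIoc_of_le hs0] at hx
        have hxI : x ∈ Icc (0:ℝ) t := hsubs ⟨hx.1.le, hx.2⟩
        have hqx : q * x ∈ Icc (0:ℝ) t := hmaps x hxI
        have h1 : ‖v (q * x)‖ ≤ M * (C * x) ^ n / n.factorial := by
          refine (IH _ hqx).trans ?_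
          have : C * (q * x) ≤ C * x := by
            have := mul_le_of_le_one_left hxI.1 hq1.le
            nlinarith
          gcongr
          exact mul_nonneg hC0 (mul_nonneg hq0.le hxI.1)
        have h2 : ‖v x‖ ≤ M * (C * x) ^ n / n.factorial := IH x hxI
        have : ‖D x‖ ≤ ‖α‖ * ‖v (q * x)‖ + ‖v x‖ := by
          rw [hD]
          calc ‖E * (α * v (q * x) - v x)‖ = ‖α * v (q * x) - v x‖ := by
                rw [norm_mul, hE, one_mul]
            _ ≤ ‖α * v (q * x)‖ + ‖v x‖ := norm_sub_le _ _
            _ = ‖α‖ * ‖v (q * x)‖ + ‖v x‖ := by rw [norm_mul]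
        refine this.trans ?_
        calc ‖α‖ * ‖v (q * x)‖ + ‖v x‖
            ≤ ‖α‖ * (M * (C * x) ^ n / n.factorial) + M * (C * x) ^ n / n.factorial := by
              gcongr
          _ = C * (M * (C * x) ^ n / n.factorial) := by rw [hCdef]; ring
          _ = M * C ^ (n+1) / n.factorial * x ^ n := by rw [mul_pow]; ring
      have hgint : IntervalIntegrable (fun x => M * C ^ (n+1) / n.factorial * x ^ n)
          volume 0 s := (continuous_const.mul (continuous_pow n)).intervalIntegrable _ _
      have hbound : ‖∫ x in (0:ℝ)..s, D x‖
          ≤ |∫ x in (0:ℝ)..s, M * C ^ (n+1) / n.factorial * x ^ n| := by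
        apply norm_integral_le_abs_of_norm_le _ hgint
        filter_upwards [ae_restrict_mem measurableSet_uIoc] with x hx
        exact hptwise x hx
      have hival : ∫ x in (0:ℝ)..s, M * C ^ (n+1) / n.factorial * x ^ n
          = M * (C * s) ^ (n+1) / (n+1).factorial := by
        rw [intervalIntegral.integral_const_mul, integral_pow]
        rw [Nat.factorial_succ, mul_pow]
        push_cast
        have h1 : ((n:ℝ) + 1) ≠ 0 := by positivity
        have h2 : (n.factorial : ℝ) ≠ 0 := by positivity
        field_simp
        ring
      rw [hvs]
      refine hbound.trans ?_
      rw [hival, abs_of_nonneg (by positivity)]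
  have hlim : Filter.Tendsto (fun n : ℕ => M * (C * t) ^ n / n.factorial)
      Filter.atTop (nhds 0) := by
    have := (FloorSemiring.tendsto_pow_div_factorial_atTop (K := ℝ) (C * t)).const_mul M
    simpa [mul_div_assoc] using this
  have : ‖v t‖ ≤ 0 := ge_of_tendsto' hlim fun n => claim n t ⟨ht0, le_refl _⟩
  exact norm_le_zero_iff.1 this

/-- the unique smooth solution of `y' = e^{id}(q^μ y(q·) - y)` on `[0,R)` with
`y(0)=1` is `t ↦ F(μ;q, t e^{id})`. -/
theorem stmt2 (q : ℝ) (hq0 : 0 < q) (hq1 : q < 1)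
    (μ : ℂ) (d R : ℝ) (hR : 0 < R)
    (u : ℝ → ℂ)
    (hu : ContDiffOn ℝ (⊤ : ℕ∞) u (Set.Ico 0 R))
    (hde : ∀ t ∈ Set.Ico (0 : ℝ) R,
      HasDerivWithinAt u
        (Complex.exp (Complex.I * d) * (qpow q μ * u (q * t) - u t)) (Set.Ico 0 R) t)
    (hu0 : u 0 = 1) :
    ∀ t ∈ Set.Ico (0 : ℝ) R, u t = F μ q ((t : ℂ) * Complex.exp (Complex.I * d)) := by
  set E : ℂ := Complex.exp (Complex.I * d) with hEdef
  set α : ℂ := qpow q μ with hαdef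
  have hE : ‖E‖ = 1 := by
    rw [hEdef, Complex.norm_exp]
    simp [Complex.mul_re]
  -- the coefficients
  set a : ℕ → ℂ := fun n => qPoch α q n / n.factorial * (-E) ^ n with hadef
  set C : ℝ := ‖α‖ + 1 with hCdef
  have hC0 : (0:ℝ) ≤ C := by positivity
  have ha : ∀ n, ‖a n‖ ≤ C ^ n / n.factorial := by
    intro n
    have hEn : ‖(-E) ^ n‖ = 1 := by rw [norm_pow, norm_neg, hE, one_pow]
    rw [hadef]
    simp only [norm_mul, hEn, mul_one, norm_div, Complex.norm_natCast]
    have hq : ‖qPoch α (q:ℂ) n‖ ≤ C ^ n := by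
      rw [qPoch, norm_prod]
      calc (∏ j ∈ Finset.range n, ‖1 - α * (q:ℂ) ^ j‖)
          ≤ ∏ j ∈ Finset.range n, C := by
            apply Finset.prod_le_prod (fun j _ => norm_nonneg _)
            intro j _
            calc ‖1 - α * (q:ℂ) ^ j‖ ≤ ‖(1:ℂ)‖ + ‖α * (q:ℂ) ^ j‖ := norm_sub_le _ _
              _ = 1 + ‖α‖ * |q| ^ j := by
                  rw [norm_one, norm_mul, norm_pow, Complex.norm_real, Real.norm_eq_abs]
              _ ≤ 1 + ‖α‖ * 1 := by
                  gcongr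
                  rw [abs_of_pos hq0]
                  exact pow_le_one₀ hq0.le hq1.le
              _ = C := by rw [hCdef]; ring
        _ = C ^ n := by rw [Finset.prod_const, Finset.card_range]
    gcongr
  have hrec : ∀ n : ℕ, ((n : ℂ) + 1) * a (n + 1) = E * (α * (q : ℂ) ^ n - 1) * a n := by
    intro n
    have hps : qPoch α (q:ℂ) (n+1) = qPoch α (q:ℂ) n * (1 - α * (q:ℂ) ^ n) := by
      simp [qPoch, Finset.prod_range_succ]
    rw [hadef]
    simp only
    rw [hps, Nat.factorial_succ, pow_succ]
    have h1 : ((n:ℂ) + 1) ≠ 0 := by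
      have : (0:ℝ) < (n:ℝ) + 1 := by positivity
      intro h
      have := congrArg Complex.re h
      simp at this
      linarith
    have h2 : ((n.factorial : ℂ)) ≠ 0 := Nat.cast_ne_zero.2 n.factorial_pos.ne'
    push_cast
    field_simp
    ring
  -- the candidate solution
  set f : ℝ → ℂ := fun t => ∑' n, a n * ((t:ℝ) : ℂ) ^ n with hfdef
  have hfF : ∀ t : ℝ, f t = F μ q ((t : ℂ) * E) := by
    intro t
    rw [hfdef, F]
    apply tsum_congr
    intro n
    have : (-(↑t * E)) ^ n = ((t:ℂ)) ^ n * (-E) ^ n := by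
      rw [← mul_pow]
      ring_nf
    rw [this, hadef]
    ring
  have hfderiv : ∀ t ∈ Set.Ico (0:ℝ) R, HasDerivAt f (E * (α * f (q * t) - f t)) t := by
    intro t ht
    have hzt : ‖((t:ℝ):ℂ)‖ < R := by
      rw [Complex.norm_real, Real.norm_eq_abs, abs_of_nonneg ht.1]
      exact ht.2
    have hg := auxDeriv a C hC0 ha q E α hrec R hR ((t:ℝ):ℂ) hzt
    have := hg.comp_ofReal
    convert this using 2
    · rw [hfdef]
      simp only
      congr 1
      push_cast
      ring
  -- the difference
  set v : ℝ → ℂ := fun t => u t - f t with hvdef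
  have hv0 : v 0 = 0 := by
    have hf0 : f 0 = 1 := by
      rw [hfdef]
      simp only [Complex.ofReal_zero]
      rw [tsum_eq_single 0 (fun n hn => by simp [zero_pow hn])]
      simp [hadef, qPoch]
    rw [hvdef]
    simp [hu0, hf0]
  have hvder : ∀ t ∈ Set.Ico (0:ℝ) R,
      HasDerivWithinAt v (E * (α * v (q * t) - v t)) (Set.Ico 0 R) t := by
    intro t ht
    have := (hde t ht).sub ((hfderiv t ht).hasDerivWithinAt)
    convert this using 1
    · rfl
    · rfl
    rw [hvdef]
    try simp only
    ring
  have := auxUnique R q hq0 hq1 E α hE v hvder hv0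
  intro t ht
  have h := this t ht
  rw [hvdef] at h
  simp only [sub_eq_zero] at h
  rw [h, hfF t]
end

section
/- Let μ ∈ ℂ and set κ := −2π/log q and μ_k := μ + kκi for k ∈ ℤ. Then: (a) F(μ;q,·) is entire and satisfies F′(x) = q^μ·F(qx) − F(x) for all x ∈ ℂ, where derivatives are in x; (b) for every k ∈ ℤ, the function H_k(x) := x^{−μ_k}·G(μ_k; q, 1/x), defined and holomorphic on ℂ ∖ (−∞,0], satisfies H_k′(x) = q^μ·H_k(qx) − H_k(x) for all x ∈ ℂ ∖ (−∞,0]. -/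
/-!
The Taylor coefficients of both series have successive ratios tending to `0`, so both are entire
and can be differentiated termwise. For `F` the recurrence `(n + 1) c_{n+1} = (q^μ q^n - 1) c_n`
is the equation `F' = q^μ F(q ·) - F` read coefficientwise. For `g = G(a; q, ·)` the recurrence
`(q^{-n-1} - 1) e_{n+1} = -(a + n) e_n` is the `q`-difference equation
`g(y / q) - g(y) = -y (a g(y) + y g'(y))`; substituting `y = 1 / x` in `x^{-a} g(1 / x)` gives the
stated equation, since `q^μ (q x)^{-μ_k} = x^{-μ_k}`: `q^μ` has period `κ i` in `μ`.
-/

open Filter Topology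

section EntirePowerSeries

variable {c : ℕ → ℂ} {ρ : ℕ → ℝ}

theorem summable_succ_mul_norm_mul_pow_of_norm_succ_le (hρ : Tendsto ρ atTop (𝓝 0))
    (hc : ∀ n, ‖c (n + 1)‖ ≤ ρ n * ‖c n‖) {r : ℝ} (hr : 0 ≤ r) :
    Summable fun n : ℕ => ((n : ℝ) + 1) * ‖c n‖ * r ^ n := by
  refine summable_of_ratio_norm_eventually_le (r := 1 / 2) (by norm_num) ?_
  have hsmall : ∀ᶠ n in atTop, 2 * r * ρ n < 1 / 2 :=
    (show Tendsto (fun n => 2 * r * ρ n) atTop (𝓝 0) by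
      simpa using hρ.const_mul (2 * r)).eventually_lt_const (by norm_num)
  filter_upwards [hsmall] with n hn
  have hρn : 0 ≤ ρ n * ‖c n‖ := (norm_nonneg _).trans (hc n)
  simp only [Real.norm_eq_abs, abs_mul, abs_pow, abs_of_nonneg hr, abs_norm, Nat.cast_add_one,
    abs_of_nonneg (by positivity : (0 : ℝ) ≤ (n : ℝ) + 1),
    abs_of_nonneg (by positivity : (0 : ℝ) ≤ (n : ℝ) + 1 + 1)]
  calc ((n : ℝ) + 1 + 1) * ‖c (n + 1)‖ * r ^ (n + 1)
      ≤ (2 * ((n : ℝ) + 1)) * (ρ n * ‖c n‖) * r ^ (n + 1) := by gcongr <;> linarith [hc n]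
    _ = 2 * r * ρ n * (((n : ℝ) + 1) * ‖c n‖ * r ^ n) := by ring
    _ ≤ 1 / 2 * (((n : ℝ) + 1) * ‖c n‖ * r ^ n) := by gcongr

lemma norm_mul_pow_le_of_norm_le {R : ℝ} {y : ℂ} (hy : ‖y‖ ≤ R) (n : ℕ) :
    ‖c n * y ^ n‖ ≤ ((n : ℝ) + 1) * ‖c n‖ * R ^ n := by
  have hR : 0 ≤ R := (norm_nonneg y).trans hy
  rw [norm_mul, norm_pow]
  calc ‖c n‖ * ‖y‖ ^ n ≤ 1 * ‖c n‖ * R ^ n := by rw [one_mul]; gcongr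
    _ ≤ ((n : ℝ) + 1) * ‖c n‖ * R ^ n := by gcongr; linarith [n.cast_nonneg (α := ℝ)]

lemma norm_natCast_mul_mul_pow_pred_le_of_norm_le {R : ℝ} (hR : 1 ≤ R) {y : ℂ} (hy : ‖y‖ ≤ R)
    (n : ℕ) : ‖(n : ℂ) * c n * y ^ (n - 1)‖ ≤ ((n : ℝ) + 1) * ‖c n‖ * R ^ n := by
  rw [norm_mul, norm_mul, norm_pow, Complex.norm_natCast]
  calc (n : ℝ) * ‖c n‖ * ‖y‖ ^ (n - 1) ≤ ((n : ℝ) + 1) * ‖c n‖ * R ^ (n - 1) := by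
        gcongr; linarith
    _ ≤ ((n : ℝ) + 1) * ‖c n‖ * R ^ n := by gcongr; exact n.sub_le 1

theorem summable_mul_pow_of_norm_succ_le (hρ : Tendsto ρ atTop (𝓝 0))
    (hc : ∀ n, ‖c (n + 1)‖ ≤ ρ n * ‖c n‖) (y : ℂ) : Summable fun n : ℕ => c n * y ^ n :=
  .of_norm_bounded (summable_succ_mul_norm_mul_pow_of_norm_succ_le hρ hc (norm_nonneg y))
    (norm_mul_pow_le_of_norm_le le_rfl)

theorem summable_natCast_mul_mul_pow_pred_of_norm_succ_le (hρ : Tendsto ρ atTop (𝓝 0))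
    (hc : ∀ n, ‖c (n + 1)‖ ≤ ρ n * ‖c n‖) (y : ℂ) :
    Summable fun n : ℕ => (n : ℂ) * c n * y ^ (n - 1) :=
  .of_norm_bounded (summable_succ_mul_norm_mul_pow_of_norm_succ_le hρ hc (by positivity))
    (norm_natCast_mul_mul_pow_pred_le_of_norm_le (le_add_of_nonneg_left (norm_nonneg y))
      (le_add_of_nonneg_right zero_le_one))

theorem hasDerivAt_tsum_mul_pow_of_norm_succ_le (hρ : Tendsto ρ atTop (𝓝 0))
    (hc : ∀ n, ‖c (n + 1)‖ ≤ ρ n * ‖c n‖) (x : ℂ) :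
    HasDerivAt (fun z => ∑' n : ℕ, c n * z ^ n) (∑' n : ℕ, (n : ℂ) * c n * x ^ (n - 1)) x := by
  set R := ‖x‖ + 1
  have hxR : x ∈ Metric.ball (0 : ℂ) R := by simp [R]
  refine hasDerivAt_tsum_of_isPreconnected (g' := fun (n : ℕ) y => (n : ℂ) * c n * y ^ (n - 1))
    (summable_succ_mul_norm_mul_pow_of_norm_succ_le hρ hc (by positivity : (0 : ℝ) ≤ R))
    Metric.isOpen_ball (convex_ball 0 R).isPreconnected
    (fun n y _ => by simpa [mul_comm, mul_assoc] using (hasDerivAt_pow n y).const_mul (c n))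
    (fun n y hy => norm_natCast_mul_mul_pow_pred_le_of_norm_le (by simp [R])
      (mem_ball_zero_iff.mp hy).le n)
    hxR (summable_mul_pow_of_norm_succ_le hρ hc x) hxR

end EntirePowerSeries

section F

noncomputable def fCoeff (w : ℂ) (q : ℝ) (n : ℕ) : ℂ := qPoch w q n / n.factorial * (-1) ^ n

lemma F_eq_tsum (μ : ℂ) (q : ℝ) : F μ q = fun x => ∑' n : ℕ, fCoeff (qpow q μ) q n * x ^ n := by
  funext x
  exact tsum_congr fun n => by rw [fCoeff, neg_pow]; ring

lemma fCoeff_succ (w : ℂ) (q : ℝ) (n : ℕ) :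
    fCoeff w q (n + 1) = (w * q ^ n - 1) / (n + 1) * fCoeff w q n := by
  simp only [fCoeff, qPoch, Finset.prod_range_succ, Nat.factorial_succ]
  push_cast
  field_simp
  ring

lemma norm_fCoeff_succ_le (w : ℂ) {q : ℝ} (hq : |q| ≤ 1) (n : ℕ) :
    ‖fCoeff w q (n + 1)‖ ≤ (‖w‖ + 1) / (n + 1) * ‖fCoeff w q n‖ := by
  have hqn : ‖(q : ℂ) ^ n‖ ≤ 1 := by
    rw [norm_pow, Complex.norm_real, Real.norm_eq_abs]; exact pow_le_one₀ (abs_nonneg q) hq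
  have hnum : ‖w * (q : ℂ) ^ n - 1‖ ≤ ‖w‖ + 1 := by
    refine (norm_sub_le _ _).trans ?_
    rw [norm_mul, norm_one]
    gcongr
    exact mul_le_of_le_one_right (norm_nonneg w) hqn
  have hden : ‖((n : ℂ) + 1)‖ = n + 1 := by exact_mod_cast Complex.norm_natCast (n + 1)
  rw [fCoeff_succ, norm_mul, norm_div, hden]
  gcongr

theorem hasDerivAt_F (μ : ℂ) {q : ℝ} (hq : |q| ≤ 1) (x : ℂ) :
    HasDerivAt (F μ q) (qpow q μ * F μ q (q * x) - F μ q x) x := by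
  set w := qpow q μ
  have hρ : Tendsto (fun n : ℕ => (‖w‖ + 1) / ((n : ℝ) + 1)) atTop (𝓝 0) := by
    simpa [div_eq_mul_inv] using tendsto_one_div_add_atTop_nhds_zero_nat.const_mul (‖w‖ + 1)
  have hc := norm_fCoeff_succ_le w hq
  rw [F_eq_tsum]
  convert hasDerivAt_tsum_mul_pow_of_norm_succ_le hρ hc x using 1
  rw [(summable_natCast_mul_mul_pow_pred_of_norm_succ_le hρ hc x).tsum_eq_zero_add,
    ← tsum_mul_left, ← (summable_mul_pow_of_norm_succ_le hρ hc _).mul_left w |>.tsum_sub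
      (summable_mul_pow_of_norm_succ_le hρ hc x)]
  simp only [CharP.cast_eq_zero, zero_mul, zero_add]
  refine tsum_congr fun n => ?_
  rw [fCoeff_succ, Nat.add_sub_cancel]
  push_cast
  field_simp
  ring

end F

section G

noncomputable def gCoeff (a : ℂ) (q : ℝ) (n : ℕ) : ℂ :=
  poch a n * (q : ℂ) ^ (n * (n + 1) / 2) / qPoch q q n * (-1) ^ n

lemma G_eq_tsum (a : ℂ) (q : ℝ) : G a q = fun y => ∑' n : ℕ, gCoeff a q n * y ^ n := by
  funext y
  exact tsum_congr fun n => by rw [gCoeff, neg_pow]; ring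

lemma gCoeff_succ (a : ℂ) (q : ℝ) (n : ℕ) :
    gCoeff a q (n + 1) = -((a + n) * q ^ (n + 1) / (1 - q ^ (n + 1))) * gCoeff a q n := by
  have htri : (n + 1) * (n + 1 + 1) / 2 = n * (n + 1) / 2 + (n + 1) := by
    rw [show (n + 1) * (n + 1 + 1) = n * (n + 1) + 2 * (n + 1) by ring,
      Nat.add_mul_div_left _ _ two_pos]
  simp only [gCoeff, poch, qPoch, Finset.prod_range_succ, htri, pow_add, div_eq_mul_inv, mul_inv]
  ring

lemma inv_pow_sub_one_mul_gCoeff_succ (a : ℂ) {q : ℝ} (hq0 : q ≠ 0) {n : ℕ}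
    (hq : (q : ℂ) ^ (n + 1) ≠ 1) :
    ((q : ℂ)⁻¹ ^ (n + 1) - 1) * gCoeff a q (n + 1) = -(a + n) * gCoeff a q n := by
  have hden : (1 : ℂ) - q ^ (n + 1) ≠ 0 := sub_ne_zero.mpr hq.symm
  have hq0' : (q : ℂ) ≠ 0 := Complex.ofReal_ne_zero.mpr hq0
  rw [gCoeff_succ, inv_pow]
  field_simp

lemma norm_gCoeff_succ_le (a : ℂ) {q : ℝ} (hq : |q| < 1) (n : ℕ) :
    ‖gCoeff a q (n + 1)‖ ≤ (‖a‖ + n) * |q| ^ (n + 1) / (1 - |q|) * ‖gCoeff a q n‖ := by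
  have hqn : ‖(q : ℂ) ^ (n + 1)‖ = |q| ^ (n + 1) := by simp
  have hnum : ‖a + n‖ ≤ ‖a‖ + n := (norm_add_le _ _).trans_eq (by simp)
  have hden : 1 - |q| ≤ ‖1 - (q : ℂ) ^ (n + 1)‖ := by
    have hsub := norm_sub_norm_le (1 : ℂ) ((q : ℂ) ^ (n + 1))
    rw [norm_one, hqn] at hsub
    have hpow : |q| ^ (n + 1) ≤ |q| := pow_le_of_le_one (abs_nonneg q) hq.le n.succ_ne_zero
    linarith
  rw [gCoeff_succ, norm_mul, norm_neg, norm_div, norm_mul, hqn]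
  gcongr

lemma tendsto_ratio_gCoeff (a : ℂ) {q : ℝ} (hq : |q| < 1) :
    Tendsto (fun n : ℕ => (‖a‖ + n) * |q| ^ (n + 1) / (1 - |q|)) atTop (𝓝 0) := by
  have h := ((tendsto_pow_atTop_nhds_zero_of_lt_one (abs_nonneg q) hq).const_mul ‖a‖).add
    (tendsto_self_mul_const_pow_of_lt_one (abs_nonneg q) hq) |>.mul_const (|q| / (1 - |q|))
  simp only [mul_zero, add_zero, zero_mul] at h
  refine h.congr fun n => ?_
  have hden : 1 - |q| ≠ 0 := by linarith
  field_simp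
  ring

theorem hasDerivAt_G (a : ℂ) {q : ℝ} (hq : |q| < 1) (y : ℂ) :
    HasDerivAt (G a q) (∑' n : ℕ, (n : ℂ) * gCoeff a q n * y ^ (n - 1)) y := by
  rw [G_eq_tsum]
  exact hasDerivAt_tsum_mul_pow_of_norm_succ_le (tendsto_ratio_gCoeff a hq)
    (norm_gCoeff_succ_le a hq) y

theorem G_inv_mul_sub_G (a : ℂ) {q : ℝ} (hq0 : q ≠ 0) (hq : |q| < 1) (y : ℂ) :
    G a q ((q : ℂ)⁻¹ * y) - G a q y = -y * (a * G a q y + y * deriv (G a q) y) := by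
  have hρ := tendsto_ratio_gCoeff a hq
  have hc := norm_gCoeff_succ_le a hq
  have hS := summable_mul_pow_of_norm_succ_le hρ hc
  rw [(hasDerivAt_G a hq y).deriv, G_eq_tsum]
  calc ∑' n : ℕ, gCoeff a q n * ((q : ℂ)⁻¹ * y) ^ n - ∑' n : ℕ, gCoeff a q n * y ^ n
      = ∑' n : ℕ, -(a + n) * gCoeff a q n * y ^ (n + 1) := by
        rw [← (hS _).tsum_sub (hS y), ((hS _).sub (hS y)).tsum_eq_zero_add]
        simp only [pow_zero, sub_self, zero_add]
        refine tsum_congr fun n => ?_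
        have hqn : (q : ℂ) ^ (n + 1) ≠ 1 := fun h =>
          (pow_lt_one₀ (abs_nonneg q) hq n.succ_ne_zero).ne (by simpa using congrArg norm h)
        rw [← inv_pow_sub_one_mul_gCoeff_succ a hq0 hqn]
        ring
    _ = -y * (a * ∑' n : ℕ, gCoeff a q n * y ^ n
          + y * ∑' n : ℕ, (n : ℂ) * gCoeff a q n * y ^ (n - 1)) := by
        rw [← tsum_mul_left, ← tsum_mul_left, ← (hS y).mul_left a |>.tsum_add
          ((summable_natCast_mul_mul_pow_pred_of_norm_succ_le hρ hc y).mul_left y),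
          ← tsum_mul_left]
        refine tsum_congr fun n => ?_
        rcases n with _ | n
        · simp only [pow_zero, CharP.cast_eq_zero]; ring
        · push_cast; ring

end G

section Powers

open Complex

lemma ofReal_cpow_eq_qpow {q : ℝ} (hq : 0 < q) (s : ℂ) : (q : ℂ) ^ s = qpow q s := by
  rw [cpow_def_of_ne_zero (ofReal_ne_zero.mpr hq.ne'), ← ofReal_log hq.le, qpow, mul_comm]

lemma qpow_add (q : ℝ) (s t : ℂ) : qpow q (s + t) = qpow q s * qpow q t := by
  simp only [qpow, add_mul, exp_add]

lemma qpow_add_int_mul_period {q κ : ℝ} (hq : Real.log q ≠ 0)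
    (hκ : κ = -(2 * Real.pi) / Real.log q) (μ : ℂ) (k : ℤ) :
    qpow q (μ + k * κ * I) = qpow q μ := by
  have hq' : (Real.log q : ℂ) ≠ 0 := ofReal_ne_zero.mpr hq
  have hκq : (κ : ℂ) * Real.log q = -(2 * Real.pi) := by
    rw [hκ]; push_cast; field_simp
  suffices qpow q (k * κ * I) = 1 by rw [qpow_add, this, mul_one]
  rw [qpow, show (k : ℂ) * κ * I * Real.log q = (-k : ℤ) * (2 * Real.pi * I) by
    push_cast; linear_combination k * I * hκq, exp_int_mul_two_pi_mul_I]

lemma ofReal_mul_cpow {q : ℝ} (hq : 0 < q) (x s : ℂ) :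
    ((q : ℂ) * x) ^ s = (q : ℂ) ^ s * x ^ s := by
  have hq' : (q : ℂ) ≠ 0 := ofReal_ne_zero.mpr hq.ne'
  rcases eq_or_ne x 0 with rfl | hx
  · rcases eq_or_ne s 0 with rfl | hs <;> simp [*]
  rw [cpow_def_of_ne_zero (mul_ne_zero hq' hx), log_ofReal_mul hq hx, cpow_def_of_ne_zero hx,
    cpow_def_of_ne_zero hq', ofReal_log hq.le, add_mul, exp_add]

theorem hasDerivAt_cpow_neg_mul_comp_inv {g : ℂ → ℂ} (a : ℂ) {x : ℂ} (hx : x ∈ slitPlane)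
    (hg : DifferentiableAt ℂ g x⁻¹) :
    HasDerivAt (fun z => z ^ (-a) * g z⁻¹)
      (x ^ (-a) * (-x⁻¹ * (a * g x⁻¹ + x⁻¹ * deriv g x⁻¹))) x := by
  have hx0 : x ≠ 0 := slitPlane_ne_zero hx
  have hpow : HasDerivAt (· ^ (-a)) (-a * x ^ (-a - 1)) x :=
    (hasStrictDerivAt_cpow_const hx).hasDerivAt
  have hcomp : HasDerivAt (fun z => g z⁻¹) (deriv g x⁻¹ * -(x ^ 2)⁻¹) x :=
    hg.hasDerivAt.comp x (hasDerivAt_inv hx0)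
  refine (hpow.mul hcomp).congr_deriv ?_
  rw [cpow_sub _ _ hx0, cpow_one]
  field_simp
  ring

end Powers

/-- `F(μ;q,·)` is an entire solution of `y' = q^μ y(q·) - y`, and for each `k ∈ ℤ`,
`x ↦ x^{-μ_k} G(μ_k;q,1/x)` (with `μ_k = μ + kκi`, `κ = -2π/log q`) is a holomorphic solution
on the slit plane `ℂ ∖ (-∞,0]`. -/
theorem stmt3 (q : ℝ) (hq0 : 0 < q) (hq1 : q < 1)
    (κ : ℝ) (hκ : κ = -(2 * Real.pi) / Real.log q) (μ : ℂ) :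
    (Differentiable ℂ (F μ q) ∧
      ∀ x : ℂ, HasDerivAt (F μ q) (qpow q μ * F μ q ((q : ℂ) * x) - F μ q x) x) ∧
    (∀ k : ℤ,
      DifferentiableOn ℂ
        (fun z : ℂ => z ^ (-(μ + (k : ℂ) * (κ : ℂ) * Complex.I)) *
          G (μ + (k : ℂ) * (κ : ℂ) * Complex.I) q (1 / z)) Complex.slitPlane ∧
      ∀ x ∈ Complex.slitPlane,
        HasDerivAt
          (fun z : ℂ => z ^ (-(μ + (k : ℂ) * (κ : ℂ) * Complex.I)) *
            G (μ + (k : ℂ) * (κ : ℂ) * Complex.I) q (1 / z))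
          (qpow q μ *
              (((q : ℂ) * x) ^ (-(μ + (k : ℂ) * (κ : ℂ) * Complex.I)) *
                G (μ + (k : ℂ) * (κ : ℂ) * Complex.I) q (1 / ((q : ℂ) * x))) -
            x ^ (-(μ + (k : ℂ) * (κ : ℂ) * Complex.I)) *
              G (μ + (k : ℂ) * (κ : ℂ) * Complex.I) q (1 / x))
          x) := by
  have hq : |q| < 1 := abs_lt.mpr ⟨by linarith, hq1⟩
  refine ⟨⟨fun x => (hasDerivAt_F μ hq.le x).differentiableAt, hasDerivAt_F μ hq.le⟩,
    fun k => ?_⟩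
  set a := μ + (k : ℂ) * (κ : ℂ) * Complex.I
  have hunit : qpow q μ * (q : ℂ) ^ (-a) = 1 := by
    rw [ofReal_cpow_eq_qpow hq0, ← qpow_add_int_mul_period (Real.log_neg hq0 hq1).ne hκ μ k,
      ← qpow_add, add_neg_cancel, qpow, zero_mul, Complex.exp_zero]
  have hderiv : ∀ x ∈ Complex.slitPlane, HasDerivAt (fun z : ℂ => z ^ (-a) * G a q (1 / z))
      (qpow q μ * (((q : ℂ) * x) ^ (-a) * G a q (1 / ((q : ℂ) * x))) - x ^ (-a) * G a q (1 / x))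
      x := by
    intro x hx
    simp only [one_div]
    convert hasDerivAt_cpow_neg_mul_comp_inv a hx (hasDerivAt_G a hq _).differentiableAt using 1
    rw [mul_inv, ofReal_mul_cpow hq0, ← G_inv_mul_sub_G a hq0.ne' hq]
    linear_combination x ^ (-a) * G a q ((q : ℂ)⁻¹ * x⁻¹) * hunit
  exact ⟨fun x hx => (hderiv x hx).differentiableAt.differentiableWithinAt, hderiv⟩
end

section
/- Let μ ∈ ℂ with Re(μ) > 0. Then for every x ∈ ℂ, F(μ;q,x) = (q^μ;q)_∞ · Σ_{n=0}^∞ q^{nμ}·e^{−q^n x}/(q;q)_n, the series on the right converging absolutely. -/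
/-!
Expanding `exp (-qⁿ x) = ∑ₘ (-qⁿ x)ᵐ / m!` turns the right-hand side into an absolutely convergent
double series. Summing over `n` first gives `∑ₘ (-x)ᵐ / m! · e_q(a qᵐ)` with `a = q^μ` and Euler's
`q`-exponential `e_q(w) = ∑ₙ wⁿ / (q;q)ₙ`. Euler's identity `(w;q)_∞ e_q(w) = 1` for `‖w‖ < 1`
(iterate `(1 - w) e_q(w) = e_q(q w)` and let `qᴺ w → 0`) then turns `(a;q)_∞ e_q(a qᵐ)` into
`(a;q)_∞ / (a qᵐ;q)_∞ = (a;q)ₘ`.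
-/

open Finset Filter Topology

section QPochhammer

variable {q : ℂ}

lemma norm_pow_mul_le (hq : ‖q‖ ≤ 1) (w : ℂ) (n : ℕ) : ‖q ^ n * w‖ ≤ ‖w‖ := by
  rw [norm_mul, norm_pow]
  exact mul_le_of_le_one_left (norm_nonneg w) (pow_le_one₀ (norm_nonneg q) hq)

lemma qPoch_succ (a c : ℂ) (n : ℕ) : qPoch a c (n + 1) = qPoch a c n * (1 - a * c ^ n) :=
  prod_range_succ _ n

lemma qPoch_ne_zero (hq : ‖q‖ ≤ 1) {w : ℂ} (hw : ‖w‖ < 1) (n : ℕ) : qPoch w q n ≠ 0 := by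
  refine prod_ne_zero_iff.2 fun j _ h => ?_
  have hlt : ‖q ^ j * w‖ < 1 := (norm_pow_mul_le hq w j).trans_lt hw
  rw [mul_comm, ← sub_eq_zero.1 h, norm_one] at hlt
  exact lt_irrefl _ hlt

lemma multipliable_one_sub_mul_pow (hq : ‖q‖ < 1) (w : ℂ) :
    Multipliable fun j : ℕ => 1 - w * q ^ j := by
  simpa [sub_eq_add_neg] using multipliable_one_add_of_summable (f := fun j : ℕ => -(w * q ^ j))
    (by simpa [norm_mul, norm_pow] using
      (summable_geometric_of_lt_one (norm_nonneg q) hq).mul_left ‖w‖)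

lemma tendsto_qPoch_qPochInf (hq : ‖q‖ < 1) (w : ℂ) :
    Tendsto (qPoch w q) atTop (𝓝 (qPochInf w q)) :=
  (multipliable_one_sub_mul_pow hq w).hasProd.tendsto_prod_nat

lemma qPoch_mul_qPochInf_mul_pow (hq : ‖q‖ < 1) (w : ℂ) (m : ℕ) :
    qPoch w q m * qPochInf (w * q ^ m) q = qPochInf w q := by
  have hshift : (fun j : ℕ => 1 - w * q ^ (j + m)) = fun j => 1 - w * q ^ m * q ^ j := by
    ext j; ring
  have := Multipliable.prod_mul_tprod_nat_mul' (f := fun j : ℕ => 1 - w * q ^ j) (k := m)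
    (hshift ▸ multipliable_one_sub_mul_pow hq (w * q ^ m))
  rwa [hshift] at this

end QPochhammer

noncomputable def qExp (q w : ℂ) : ℂ := ∑' n : ℕ, w ^ n / qPoch q q n

section QExp

variable {q w : ℂ}

lemma summable_norm_pow_div_qPoch (hq : ‖q‖ < 1) (hw : ‖w‖ < 1) :
    Summable fun n : ℕ => ‖w‖ ^ n / ‖qPoch q q n‖ := by
  obtain ⟨r, hwr, hr1⟩ := exists_between hw
  refine summable_of_ratio_norm_eventually_le hr1 ?_
  have hfactor : Tendsto (fun n : ℕ => ‖w‖ / ‖1 - q * q ^ n‖) atTop (𝓝 ‖w‖) := by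
    have h : Tendsto (fun n : ℕ => 1 - q * q ^ n) atTop (𝓝 1) := by
      simpa using ((tendsto_pow_atTop_nhds_zero_of_norm_lt_one hq).const_mul q).const_sub 1
    simpa [div_eq_mul_inv] using (h.norm.inv₀ (by simp)).const_mul ‖w‖
  filter_upwards [hfactor.eventually_le_const hwr] with n hn
  simp only [Real.norm_eq_abs, abs_div, abs_pow, abs_norm]
  rw [qPoch_succ, pow_succ, norm_mul]
  calc ‖w‖ ^ n * ‖w‖ / (‖qPoch q q n‖ * ‖1 - q * q ^ n‖)
      = ‖w‖ / ‖1 - q * q ^ n‖ * (‖w‖ ^ n / ‖qPoch q q n‖) := by ring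
    _ ≤ r * (‖w‖ ^ n / ‖qPoch q q n‖) := by gcongr

lemma summable_pow_div_qPoch (hq : ‖q‖ < 1) (hw : ‖w‖ < 1) :
    Summable fun n : ℕ => w ^ n / qPoch q q n :=
  .of_norm (by simpa [norm_div, norm_pow] using summable_norm_pow_div_qPoch hq hw)

lemma one_sub_mul_qExp (hq : ‖q‖ < 1) (hw : ‖w‖ < 1) :
    (1 - w) * qExp q w = qExp q (q * w) := by
  have hqw : ‖q * w‖ < 1 := by simpa using (norm_pow_mul_le hq.le w 1).trans_lt hw
  have hshift (n : ℕ) : w ^ (n + 1) / qPoch q q (n + 1) - (q * w) ^ (n + 1) / qPoch q q (n + 1)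
      = w * (w ^ n / qPoch q q n) := by
    have hne := qPoch_ne_zero hq.le hq (n + 1)
    rw [qPoch_succ] at hne ⊢
    field_simp [mul_ne_zero_iff.1 hne]
    ring
  have hdiff : qExp q w - qExp q (q * w) = w * qExp q w := by
    rw [qExp, qExp, ← (summable_pow_div_qPoch hq hw).tsum_sub (summable_pow_div_qPoch hq hqw),
      ((summable_pow_div_qPoch hq hw).sub (summable_pow_div_qPoch hq hqw)).tsum_eq_zero_add,
      tsum_congr hshift, tsum_mul_left]
    simp
  linear_combination hdiff

lemma qPoch_mul_qExp (hq : ‖q‖ < 1) (hw : ‖w‖ < 1) (N : ℕ) :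
    qPoch w q N * qExp q w = qExp q (q ^ N * w) := by
  induction N with
  | zero => simp [qPoch]
  | succ N ih =>
    rw [qPoch_succ, mul_right_comm, ih, mul_comm, mul_comm w,
      one_sub_mul_qExp hq ((norm_pow_mul_le hq.le w N).trans_lt hw), ← mul_assoc, ← pow_succ']

lemma tendsto_qExp_pow_mul (hq : ‖q‖ < 1) (hw : ‖w‖ < 1) :
    Tendsto (fun N : ℕ => qExp q (q ^ N * w)) atTop (𝓝 1) := by
  have hzero : ∑' n : ℕ, (0 : ℂ) ^ n / qPoch q q n = 1 := by
    rw [tsum_eq_single 0 fun n hn => by simp [zero_pow hn]]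
    simp [qPoch]
  rw [← hzero]
  refine tendsto_tsum_of_dominated_convergence (summable_norm_pow_div_qPoch hq hw)
    (fun n => ?_) (.of_forall fun N n => ?_)
  · simpa using (((tendsto_pow_atTop_nhds_zero_of_norm_lt_one hq).mul_const w).pow n).div_const
      (qPoch q q n)
  · rw [norm_div, norm_pow]
    gcongr
    exact norm_pow_mul_le hq.le w N

theorem qPochInf_mul_qExp (hq : ‖q‖ < 1) (hw : ‖w‖ < 1) : qPochInf w q * qExp q w = 1 :=
  tendsto_nhds_unique ((tendsto_qPoch_qPochInf hq w).mul_const _)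
    ((tendsto_qExp_pow_mul hq hw).congr fun N => (qPoch_mul_qExp hq hw N).symm)

lemma qPochInf_mul_qExp_mul_pow (hq : ‖q‖ < 1) (hw : ‖w‖ < 1) (m : ℕ) :
    qPochInf w q * qExp q (w * q ^ m) = qPoch w q m := by
  have hwm : ‖w * q ^ m‖ < 1 := by simpa [mul_comm] using (norm_pow_mul_le hq.le w m).trans_lt hw
  rw [← qPoch_mul_qPochInf_mul_pow hq w m, mul_assoc, qPochInf_mul_qExp hq hwm, mul_one]

end QExp

section DirichletSeries

variable {q a : ℂ}

lemma norm_pow_mul_exp_div_qPoch_le (hq : ‖q‖ ≤ 1) (x : ℂ) (n : ℕ) :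
    ‖a ^ n * Complex.exp (-(q ^ n * x)) / qPoch q q n‖ ≤
      Real.exp ‖x‖ * (‖a‖ ^ n / ‖qPoch q q n‖) := by
  have hexp : ‖Complex.exp (-(q ^ n * x))‖ ≤ Real.exp ‖x‖ :=
    (Complex.norm_exp_le_exp_norm _).trans
      (Real.exp_le_exp.2 (by simpa using norm_pow_mul_le hq x n))
  rw [norm_div, norm_mul, norm_pow, mul_comm, mul_div_assoc]
  gcongr

lemma summable_norm_pow_mul_exp_div_qPoch (hq : ‖q‖ < 1) (ha : ‖a‖ < 1) (x : ℂ) :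
    Summable fun n : ℕ => ‖a ^ n * Complex.exp (-(q ^ n * x)) / qPoch q q n‖ :=
  .of_nonneg_of_le (fun _ => norm_nonneg _) (norm_pow_mul_exp_div_qPoch_le hq.le x)
    ((summable_norm_pow_div_qPoch hq ha).mul_left _)

lemma summable_uncurry_pow_div_qPoch_mul_pow_div_factorial (hq : ‖q‖ < 1) (ha : ‖a‖ < 1)
    (x : ℂ) :
    Summable (Function.uncurry fun n m : ℕ =>
      a ^ n / qPoch q q n * ((-(q ^ n * x)) ^ m / m.factorial)) := by
  refine .of_norm_bounded (g := fun p : ℕ × ℕ =>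
      ‖a‖ ^ p.1 / ‖qPoch q q p.1‖ * (‖x‖ ^ p.2 / p.2.factorial))
    ((summable_norm_pow_div_qPoch hq ha).mul_of_nonneg (Real.summable_pow_div_factorial ‖x‖)
      (fun _ => by positivity) (fun _ => by positivity)) fun ⟨n, m⟩ => ?_
  simp only [Function.uncurry]
  rw [norm_mul, norm_div, norm_div, norm_pow, norm_pow, Complex.norm_natCast]
  gcongr
  simpa using norm_pow_mul_le hq.le x n

theorem tsum_qPoch_div_factorial_mul_pow (hq : ‖q‖ < 1) (ha : ‖a‖ < 1) (x : ℂ) :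
    ∑' m : ℕ, qPoch a q m / m.factorial * (-x) ^ m =
      qPochInf a q * ∑' n : ℕ, a ^ n * Complex.exp (-(q ^ n * x)) / qPoch q q n := by
  have hT := summable_uncurry_pow_div_qPoch_mul_pow_div_factorial hq ha x
  set T : ℕ → ℕ → ℂ := fun n m => a ^ n / qPoch q q n * ((-(q ^ n * x)) ^ m / m.factorial)
  have hrow (n : ℕ) : ∑' m, T n m = a ^ n * Complex.exp (-(q ^ n * x)) / qPoch q q n := by
    rw [tsum_mul_left, Complex.exp_eq_exp_ℂ, NormedSpace.exp_eq_tsum_div, mul_div_right_comm]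
  have hcol (m : ℕ) : ∑' n, T n m = (-x) ^ m / m.factorial * qExp q (a * q ^ m) := by
    rw [qExp, ← tsum_mul_left]
    congr with n
    ring
  rw [← tsum_congr hrow, ← hT.tsum_comm, tsum_congr hcol, ← tsum_mul_left]
  refine tsum_congr fun m => ?_
  rw [mul_left_comm, qPochInf_mul_qExp_mul_pow hq ha m]
  ring

end DirichletSeries

lemma norm_qpow_lt_one {q : ℝ} (hq0 : 0 < q) (hq1 : q < 1) {μ : ℂ} (hμ : 0 < μ.re) :
    ‖qpow q μ‖ < 1 := by
  rw [qpow, Complex.norm_exp, Real.exp_lt_one_iff]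
  simpa using mul_neg_of_pos_of_neg hμ (Real.log_neg hq0 hq1)

/-- Dirichlet series representation
`F(μ;q,x) = (q^μ;q)_∞ Σ_{n≥0} q^{nμ} e^{-q^n x} / (q;q)_n` for `Re μ > 0`. -/
theorem stmt6 (q : ℝ) (hq0 : 0 < q) (hq1 : q < 1)
    (μ : ℂ) (hμ : 0 < μ.re) (x : ℂ) :
    Summable (fun n : ℕ =>
      ‖qpow q μ ^ n * Complex.exp (-((q : ℂ) ^ n * x)) /
        qPoch (q : ℂ) (q : ℂ) n‖) ∧
    F μ q x =
      qPochInf (qpow q μ) (q : ℂ) *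
        ∑' n : ℕ, qpow q μ ^ n * Complex.exp (-((q : ℂ) ^ n * x)) /
          qPoch (q : ℂ) (q : ℂ) n := by
  have hq : ‖(q : ℂ)‖ < 1 := by rwa [Complex.norm_real, Real.norm_of_nonneg hq0.le]
  have ha := norm_qpow_lt_one hq0 hq1 hμ
  exact ⟨summable_norm_pow_mul_exp_div_qPoch hq ha x, tsum_qPoch_div_factorial_mul_pow hq ha x⟩
end

section
/- There exists a function ℓ, holomorphic on the open disc {z ∈ ℂ : |z| < 2√π}, such that ℓ(0) = 0, ℓ′(0) = 1, and (1 − ℓ(z))·exp(ℓ(z)) = exp(−z²/2) for all z with |z| < 2√π. (This is the germ ℓ(z) = W(−e^{−1−z²/2}) + 1 of the Lambert W-function, shown to extend analytically to the full disc of radius 2√π.) -/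
/-!
Writing `ℓ = 1 - e^{-m}`, the equation becomes `φ(m) = z²/2` with `φ(m) = m - 1 + e^{-m}`.
Since `φ(m) = m²/2 + O(m³)`, near `0` it has a holomorphic square root `τ` with `τ'(0) = 1`, and
`m = τ⁻¹` is the germ; every solution tangent to the identity agrees with it near `0`, so solutions
on a disc are unique. A solution on `|z| < r` with `r < 2√π` continues to a larger disc. There
`|z²/2| < 2π`, so `m` never reaches the lines `Im m = ±3π` (on which `Im φ(m) = Im m`), which
confines `m` to a bounded region. At a limit value `w` of `m` at a boundary point `ζ`, the
derivative `φ'(w) = 1 - e^{-w}` could only vanish for `w = 2πik`, where `φ(w) = w` would force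
`ζ = 0` or `|ζ²/2| ≥ 2π`. Hence a local inverse of `φ` at `w` continues `m` across `ζ`, and
compactness of the circle yields a larger disc. The supremum of the radii is therefore `2√π`.
-/

open Complex Metric Set Filter Topology
open scoped Real

theorem AnalyticAt.exists_localInverse {𝕜 : Type*} [NontriviallyNormedField 𝕜] [CompleteSpace 𝕜]
    {f : 𝕜 → 𝕜} {a : 𝕜} (hf : AnalyticAt 𝕜 f a) (hf' : deriv f a ≠ 0) :
    ∃ g : 𝕜 → 𝕜, AnalyticAt 𝕜 g (f a) ∧ (∀ᶠ x in 𝓝 a, g (f x) = x) ∧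
      ∀ᶠ y in 𝓝 (f a), f (g y) = y := by
  have hs := hf.hasStrictDerivAt.hasStrictFDerivAt_equiv hf'
  refine ⟨hs.localInverse f _ a, ?_, hs.eventually_left_inverse, hs.eventually_right_inverse⟩
  exact (hs.toOpenPartialHomeomorph f).analyticAt_symm' hs.mem_toOpenPartialHomeomorph_source
    hf hs.hasFDerivAt.fderiv

theorem eventuallyEq_id_of_sq_eq {𝕜 : Type*} [RCLike 𝕜] {h : 𝕜 → 𝕜} (hd : HasDerivAt h 1 0)
    (hsq : ∀ᶠ z in 𝓝 0, h z ^ 2 = z ^ 2) : h =ᶠ[𝓝 0] id := by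
  have h0 : h 0 = 0 := by simpa using hsq.self_of_nhds
  have hlo : (fun z => h z - z) =o[𝓝 0] fun z => z := by
    simpa [h0] using hd.isLittleO
  filter_upwards [hsq, hlo.bound one_pos] with z hz hle
  rcases sq_eq_sq_iff_eq_or_eq_neg.mp hz with hz' | hz'
  · exact hz'
  · rw [hz', show -z - z = -(2 * z) by ring, norm_neg, norm_mul, RCLike.norm_two] at hle
    have : z = 0 := norm_le_zero_iff.mp (by linarith)
    simp [this, h0]

theorem exists_mem_sphere_dist_eq {E : Type*} [NormedAddCommGroup E] [NormedSpace ℝ E] {z : E}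
    {r : ℝ} (hr : 0 < r) (hz : r ≤ ‖z‖) : ∃ p ∈ sphere (0 : E) r, dist z p = ‖z‖ - r := by
  have hz0 : 0 < ‖z‖ := hr.trans_le hz
  refine ⟨(r / ‖z‖) • z, ?_, ?_⟩
  · rw [mem_sphere_zero_iff_norm, norm_smul, Real.norm_of_nonneg (by positivity)]
    field_simp
  · rw [dist_eq_norm, show z - (r / ‖z‖) • z = (1 - r / ‖z‖) • z by rw [sub_smul, one_smul],
      norm_smul, Real.norm_of_nonneg (sub_nonneg.mpr ((div_le_one hz0).mpr hz))]
    field_simp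

section Continuation

variable {E : Type*} [NormedAddCommGroup E] [NormedSpace ℂ E] [CompleteSpace E] {m : ℂ → E}
  {r η : ℝ}

theorem eqOn_of_eqOn_inter_ball {e₁ e₂ : ℂ → E} (hr : 0 < r) {x₁ x₂ : ℂ}
    (hx₁ : x₁ ∈ sphere (0 : ℂ) r) (hx : dist x₁ x₂ < η)
    (he₁ : DifferentiableOn ℂ e₁ (ball x₁ η)) (he₂ : DifferentiableOn ℂ e₂ (ball x₂ η))
    (h₁ : EqOn m e₁ (ball x₁ η ∩ ball 0 r)) (h₂ : EqOn m e₂ (ball x₂ η ∩ ball 0 r)) :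
    EqOn e₁ e₂ (ball x₁ η ∩ ball x₂ η) := by
  have hW : IsOpen (ball x₁ η ∩ ball x₂ η) := isOpen_ball.inter isOpen_ball
  have hx₁W : x₁ ∈ ball x₁ η ∩ ball x₂ η := ⟨mem_ball_self (dist_nonneg.trans_lt hx), hx⟩
  have hx₁r : x₁ ∈ closure (ball (0 : ℂ) r) := by
    rw [closure_ball 0 hr.ne']; exact sphere_subset_closedBall hx₁
  obtain ⟨p, hpW, hpr⟩ := mem_closure_iff.mp hx₁r _ hW hx₁W
  have hev : e₁ =ᶠ[𝓝 p] e₂ := by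
    filter_upwards [(hW.inter isOpen_ball).mem_nhds ⟨hpW, hpr⟩] with z hz
    rw [← h₁ ⟨hz.1.1, hz.2⟩, ← h₂ ⟨hz.1.2, hz.2⟩]
  exact ((he₁.mono inter_subset_left).analyticOnNhd hW).eqOn_of_preconnected_of_eventuallyEq
    ((he₂.mono inter_subset_right).analyticOnNhd hW)
    ((convex_ball x₁ η).inter (convex_ball x₂ η)).isPreconnected hpW hev

theorem exists_extension_ball_of_uniform (hr : 0 < r) (hm : DifferentiableOn ℂ m (ball 0 r))
    (hη : 0 < η) (e : ℂ → ℂ → E)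
    (he : ∀ x ∈ sphere (0 : ℂ) r,
      DifferentiableOn ℂ (e x) (ball x η) ∧ EqOn m (e x) (ball x η ∩ ball 0 r)) :
    ∃ M : ℂ → E, DifferentiableOn ℂ M (ball 0 (r + η / 4)) ∧ EqOn M m (ball 0 r) := by
  choose! p hp hdist using fun z : ℂ => fun hz : r ≤ ‖z‖ => exists_mem_sphere_dist_eq hr hz
  obtain ⟨M, hM_lt, hM_ge⟩ : ∃ M : ℂ → E,
      (∀ z, ‖z‖ < r → M z = m z) ∧ ∀ z, r ≤ ‖z‖ → M z = e (p z) z :=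
    ⟨fun z => if ‖z‖ < r then m z else e (p z) z, fun z hz => if_pos hz,
      fun z hz => if_neg (not_lt.mpr hz)⟩
  have hMe : ∀ x ∈ sphere (0 : ℂ) r, EqOn M (e x) (ball x (η / 2) ∩ ball 0 (r + η / 4)) := by
    intro x hx z ⟨hzx, hzr⟩
    rw [mem_ball] at hzx
    rw [mem_ball_zero_iff] at hzr
    rcases lt_or_ge ‖z‖ r with hz | hz
    · rw [hM_lt z hz]
      exact (he x hx).2 ⟨mem_ball.mpr (by linarith), mem_ball_zero_iff.mpr hz⟩
    · rw [hM_ge z hz]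
      have hzp := hdist z hz
      refine eqOn_of_eqOn_inter_ball hr (hp z hz) ?_ (he _ (hp z hz)).1 (he x hx).1
        (he _ (hp z hz)).2 (he x hx).2 ⟨mem_ball.mpr ?_, mem_ball.mpr (by linarith)⟩
      · linarith [dist_triangle_left (p z) x z]
      · rw [hzp]; linarith
  refine ⟨M, fun z hz => ?_, fun z hz => hM_lt z (mem_ball_zero_iff.mp hz)⟩
  apply DifferentiableAt.differentiableWithinAt
  rcases lt_or_ge ‖z‖ r with hzr | hzr
  · have hz' : z ∈ ball (0 : ℂ) r := mem_ball_zero_iff.mpr hzr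
    refine (hm.differentiableAt (isOpen_ball.mem_nhds hz')).congr_of_eventuallyEq ?_
    filter_upwards [isOpen_ball.mem_nhds hz'] with y hy using hM_lt y (mem_ball_zero_iff.mp hy)
  · have hzr' := mem_ball_zero_iff.mp hz
    have hzx : z ∈ ball (p z) (η / 2) ∩ ball 0 (r + η / 4) :=
      ⟨mem_ball.mpr (by rw [hdist z hzr]; linarith), hz⟩
    have hz_ball : z ∈ ball (p z) η := mem_ball.mpr (by rw [hdist z hzr]; linarith)
    refine ((he _ (hp z hzr)).1.differentiableAt (isOpen_ball.mem_nhds hz_ball)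
      ).congr_of_eventuallyEq ?_
    exact Filter.eventuallyEq_of_mem ((isOpen_ball.inter isOpen_ball).mem_nhds hzx)
        (hMe _ (hp z hzr))

theorem DifferentiableOn.exists_extension_ball (hr : 0 < r)
    (hm : DifferentiableOn ℂ m (ball 0 r))
    (hext : ∀ ζ ∈ sphere (0 : ℂ) r, ∃ δ > 0, ∃ e : ℂ → E,
      DifferentiableOn ℂ e (ball ζ δ) ∧ EqOn m e (ball ζ δ ∩ ball 0 r)) :
    ∃ ε > 0, ∃ M : ℂ → E, DifferentiableOn ℂ M (ball 0 (r + ε)) ∧ EqOn M m (ball 0 r) := by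
  choose! δ hδ e he using hext
  obtain ⟨η, hη, hleb⟩ := lebesgue_number_lemma_of_metric (isCompact_sphere (0 : ℂ) r)
    (c := fun ζ : sphere (0 : ℂ) r => ball (ζ : ℂ) (δ ζ)) (fun _ => isOpen_ball)
    fun x hx => mem_iUnion.mpr ⟨⟨x, hx⟩, mem_ball_self (hδ x hx)⟩
  have hleb' : ∀ x ∈ sphere (0 : ℂ) r, ∃ ζ ∈ sphere (0 : ℂ) r, ball x η ⊆ ball ζ (δ ζ) :=
    fun x hx => let ⟨i, hi⟩ := hleb x hx; ⟨i, i.2, hi⟩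
  choose! ζ hζs hζ using hleb'
  exact ⟨η / 4, by positivity, exists_extension_ball_of_uniform hr hm hη (fun x => e (ζ x))
    fun x hx => ⟨(he _ (hζs x hx)).1.mono (hζ x hx),
      fun z hz => (he _ (hζs x hx)).2 ⟨hζ x hx hz.1, hz.2⟩⟩⟩

end Continuation

namespace LambertGerm

noncomputable def phi (m : ℂ) : ℂ := m - 1 + exp (-m)

theorem one_sub_mul_exp_eq_exp_neg_phi (m : ℂ) :
    (1 - (1 - exp (-m))) * exp (1 - exp (-m)) = exp (-phi m) := by
  rw [sub_sub_cancel, ← exp_add, phi]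
  ring_nf

theorem phi_zero : phi 0 = 0 := by simp [phi]

theorem hasDerivAt_phi (m : ℂ) : HasDerivAt phi (1 - exp (-m)) m :=
  (((hasDerivAt_id m).sub_const 1).add (hasDerivAt_id m).neg.cexp).congr_deriv
    (by simp [sub_eq_add_neg])

theorem differentiable_phi : Differentiable ℂ phi := fun m => (hasDerivAt_phi m).differentiableAt

theorem im_phi (w : ℂ) : (phi w).im = w.im - Real.exp (-w.re) * Real.sin w.im := by
  simp [phi, exp_im, sub_eq_add_neg]

theorem abs_im_ne_three_pi {w : ℂ} (h : ‖phi w‖ < 2 * π) : |w.im| ≠ 3 * π := by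
  intro hw
  have hsin : Real.sin w.im = 0 := by
    rcases abs_eq (by positivity) |>.mp hw with hw' | hw'
    · exact Real.sin_eq_zero_iff.mpr ⟨3, by rw [hw']; push_cast; ring⟩
    · exact Real.sin_eq_zero_iff.mpr ⟨-3, by rw [hw']; push_cast; ring⟩
  have := abs_im_le_norm (phi w)
  rw [im_phi, hsin, mul_zero, sub_zero, hw] at this
  linarith [Real.pi_pos]

theorem norm_le_of_norm_phi_le {w : ℂ} (him : |w.im| ≤ 3 * π) (h : ‖phi w‖ ≤ 2 * π) :
    ‖w‖ ≤ 16 := by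
  have hπ : π < 3.15 := Real.pi_lt_d2
  have hw := norm_le_abs_re_add_abs_im w
  have hexp : ‖exp (-w)‖ = Real.exp (-w.re) := by rw [norm_exp, neg_re]
  rcases le_or_gt 0 w.re with hre | hre
  · have h1 : ‖exp (-w)‖ ≤ 1 := by rw [hexp]; exact Real.exp_le_one_iff.mpr (by linarith)
    calc ‖w‖ = ‖phi w + 1 - exp (-w)‖ := by rw [phi]; ring_nf
      _ ≤ ‖phi w‖ + ‖(1 : ℂ)‖ + ‖exp (-w)‖ := norm_sub_le_of_le (norm_add_le _ _) le_rfl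
      _ ≤ 16 := by rw [norm_one]; linarith
  · have hre' : |w.re| = -w.re := abs_of_neg hre
    have h1 : Real.exp (-w.re) ≤ 2 * π + 1 + -w.re + 3 * π := by
      calc Real.exp (-w.re) = ‖phi w - w + 1‖ := by rw [← hexp, phi]; ring_nf
        _ ≤ ‖phi w‖ + ‖w‖ + ‖(1 : ℂ)‖ := norm_add_le_of_le (norm_sub_le _ _) le_rfl
        _ ≤ 2 * π + 1 + -w.re + 3 * π := by rw [norm_one]; linarith
    have h2 := Real.quadratic_le_exp_of_nonneg (neg_nonneg.mpr hre.le)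
    nlinarith

theorem exp_neg_ne_one {w : ℂ} (h : ‖phi w‖ < 2 * π) (h0 : phi w ≠ 0) : exp (-w) ≠ 1 := by
  intro he
  have hw : phi w = w := by rw [phi, he]; ring
  obtain ⟨n, hn⟩ := exp_eq_one_iff.mp he
  have hnorm : ‖w‖ = |(n : ℝ)| * (2 * π) := by
    rw [← norm_neg, hn, norm_mul, norm_mul, norm_mul, norm_intCast, Complex.norm_two, norm_real,
      Real.norm_of_nonneg Real.pi_pos.le, norm_I]
    ring
  rw [hw] at h h0
  rcases eq_or_ne n 0 with rfl | hn0
  · exact h0 (neg_eq_zero.mp (by simpa using hn))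
  · have : (1 : ℝ) ≤ |(n : ℝ)| := by exact_mod_cast Int.one_le_abs hn0
    nlinarith [Real.pi_pos]

theorem norm_sq_div_two_lt {z : ℂ} (hz : ‖z‖ < 2 * √π) : ‖z ^ 2 / 2‖ < 2 * π := by
  have h := pow_lt_pow_left₀ hz (norm_nonneg z) two_ne_zero
  rw [mul_pow, Real.sq_sqrt Real.pi_pos.le] at h
  rw [norm_div, norm_pow, Complex.norm_two]
  linarith

/-- `phi m / m ^ 2`, continued holomorphically to `m = 0`. -/
noncomputable def chi : ℂ → ℂ := dslope (dslope phi 0) 0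

theorem phi_eq_sq_mul_chi (m : ℂ) : phi m = m ^ 2 * chi m := by
  have h₁ := sub_smul_dslope phi 0 m
  have h₂ := sub_smul_dslope (dslope phi 0) 0 m
  rw [dslope_same, (hasDerivAt_phi 0).deriv] at h₂
  simp only [sub_zero, smul_eq_mul, phi_zero, neg_zero, exp_zero, sub_self] at h₁ h₂
  rw [chi, ← h₁, ← h₂]
  ring

theorem differentiable_chi : Differentiable ℂ chi := by
  rw [← differentiableOn_univ, chi, Complex.differentiableOn_dslope univ_mem,
    Complex.differentiableOn_dslope univ_mem]
  exact differentiable_phi.differentiableOn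

theorem chi_zero : chi 0 = 1 / 2 := by
  have ho : (fun m => phi m - m ^ 2 / 2) =o[𝓝 0] fun m => m ^ 2 := by
    refine ((Complex.exp_sub_sum_range_succ_isLittleO_pow 2).comp_tendsto
      (continuous_neg.tendsto' 0 0 neg_zero)).congr (fun m => ?_) fun m => ?_
    · simp [phi, Finset.sum_range_succ]
      ring
    · simp
  have hlim : Tendsto chi (𝓝[≠] 0) (𝓝 (1 / 2)) := by
    have h := (ho.tendsto_div_nhds_zero.mono_left (nhdsWithin_le_nhds (s := {0}ᶜ))).add_const
      (1 / 2 : ℂ)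
    rw [zero_add] at h
    refine h.congr' (eventually_nhdsWithin_of_forall fun m hm => ?_)
    have hm : m ≠ 0 := hm
    rw [phi_eq_sq_mul_chi]
    field_simp
    ring
  exact tendsto_nhds_unique
    ((differentiable_chi 0).continuousAt.tendsto.mono_left nhdsWithin_le_nhds) hlim

theorem eventually_chi_ne_zero : ∀ᶠ m in 𝓝 0, chi m ≠ 0 :=
  (differentiable_chi 0).continuousAt.eventually_ne (by rw [chi_zero]; norm_num)

noncomputable def tau (m : ℂ) : ℂ := m * exp (log (2 * chi m) / 2)

theorem tau_zero : tau 0 = 0 := by simp [tau]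

theorem tau_sq {m : ℂ} (h : chi m ≠ 0) : tau m ^ 2 = 2 * phi m := by
  rw [tau, mul_pow, sq (exp _), ← exp_add, add_halves, exp_log (mul_ne_zero two_ne_zero h),
    phi_eq_sq_mul_chi]
  ring

theorem analyticAt_exp_log_two_mul_chi_div_two :
    AnalyticAt ℂ (fun m => exp (log (2 * chi m) / 2)) 0 := by
  have h : 2 * chi 0 ∈ slitPlane := by rw [chi_zero]; norm_num [one_mem_slitPlane]
  exact ((analyticAt_const.mul (differentiable_chi.analyticAt 0)).clog h).div_const.cexp

theorem analyticAt_tau : AnalyticAt ℂ tau 0 :=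
  analyticAt_id.mul analyticAt_exp_log_two_mul_chi_div_two

theorem hasStrictDerivAt_tau : HasStrictDerivAt tau 1 0 := by
  have h : HasDerivAt tau _ 0 :=
    (hasDerivAt_id 0).mul analyticAt_exp_log_two_mul_chi_div_two.differentiableAt.hasDerivAt
  simpa [h.deriv, chi_zero] using analyticAt_tau.hasStrictDerivAt

theorem exists_localInverse_tau :
    ∃ g : ℂ → ℂ, AnalyticAt ℂ g 0 ∧ (∀ᶠ x in 𝓝 0, g (tau x) = x) ∧
      ∀ᶠ y in 𝓝 0, tau (g y) = y := by
  simpa [tau_zero] using analyticAt_tau.exists_localInverse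
    (by rw [hasStrictDerivAt_tau.hasDerivAt.deriv]; exact one_ne_zero)

structure IsSolution (r : ℝ) (m : ℂ → ℂ) : Prop where
  differentiableOn : DifferentiableOn ℂ m (ball 0 r)
  map_zero : m 0 = 0
  deriv_zero : deriv m 0 = 1
  phi_comp : ∀ z ∈ ball (0 : ℂ) r, phi (m z) = z ^ 2 / 2

theorem exists_isSolution_near_zero : ∃ r > 0, ∃ m, IsSolution r m := by
  obtain ⟨g, hga, hg_left, hg_right⟩ := exists_localInverse_tau
  have hg0 : g 0 = 0 := by simpa [tau_zero] using hg_left.self_of_nhds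
  have hgd : HasStrictDerivAt g 1 0 := by
    simpa [tau_zero] using hasStrictDerivAt_tau.to_local_left_inverse one_ne_zero hg_left
  have hchi : ∀ᶠ y in 𝓝 0, chi (g y) ≠ 0 :=
    hga.continuousAt.tendsto.eventually (by rw [hg0]; exact eventually_chi_ne_zero)
  obtain ⟨r, hr, hball⟩ := Metric.eventually_nhds_iff_ball.mp
    (hga.eventually_analyticAt.and (hg_right.and hchi))
  refine ⟨r, hr, g, fun y hy => (hball y hy).1.differentiableAt.differentiableWithinAt, hg0,
    hgd.hasDerivAt.deriv, fun y hy => ?_⟩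
  obtain ⟨-, hτ, hχ⟩ := hball y hy
  have := tau_sq hχ
  rw [hτ] at this
  linear_combination -this / 2

namespace IsSolution

variable {r s : ℝ} {m m₁ m₂ : ℂ → ℂ}

theorem mono (hm : IsSolution r m) (h : s ≤ r) : IsSolution s m :=
  ⟨hm.differentiableOn.mono (ball_subset_ball h), hm.map_zero, hm.deriv_zero,
    fun z hz => hm.phi_comp z (ball_subset_ball h hz)⟩

theorem hasDerivAt_zero (hm : IsSolution r m) (hr : 0 < r) : HasDerivAt m 1 0 := by
  rw [← hm.deriv_zero]
  exact (hm.differentiableOn.differentiableAt (ball_mem_nhds 0 hr)).hasDerivAt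

theorem tendsto_zero (hm : IsSolution r m) (hr : 0 < r) : Tendsto m (𝓝 0) (𝓝 0) := by
  simpa only [hm.map_zero] using (hm.hasDerivAt_zero hr).continuousAt.tendsto

theorem tau_comp_eventuallyEq_id (hm : IsSolution r m) (hr : 0 < r) :
    (fun z => tau (m z)) =ᶠ[𝓝 0] id := by
  refine eventuallyEq_id_of_sq_eq ?_ ?_
  · have ht : HasDerivAt tau 1 (m 0) := by
      rw [hm.map_zero]; exact hasStrictDerivAt_tau.hasDerivAt
    exact (ht.comp 0 (hm.hasDerivAt_zero hr)).congr_deriv (one_mul 1)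
  · filter_upwards [hm.tendsto_zero hr |>.eventually eventually_chi_ne_zero, ball_mem_nhds 0 hr]
      with z hz hzr
    rw [tau_sq hz, hm.phi_comp z hzr]
    ring

theorem eventuallyEq (h₁ : IsSolution r m₁) (h₂ : IsSolution r m₂) (hr : 0 < r) :
    m₁ =ᶠ[𝓝 0] m₂ := by
  obtain ⟨g, -, hg, -⟩ := exists_localInverse_tau
  have key : ∀ m, IsSolution r m → m =ᶠ[𝓝 0] g := fun m hm => by
    filter_upwards [hm.tendsto_zero hr |>.eventually hg, hm.tau_comp_eventuallyEq_id hr]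
      with z h₁ h₂
    rw [← h₁, h₂, id]
  exact (key _ h₁).trans (key _ h₂).symm

theorem eqOn (h₁ : IsSolution r m₁) (h₂ : IsSolution r m₂) (hr : 0 < r) :
    EqOn m₁ m₂ (ball 0 r) :=
  (h₁.differentiableOn.analyticOnNhd isOpen_ball).eqOn_of_preconnected_of_eventuallyEq
    (h₂.differentiableOn.analyticOnNhd isOpen_ball) (convex_ball 0 r).isPreconnected
    (mem_ball_self hr) (h₁.eventuallyEq h₂ hr)

theorem abs_im_lt (hm : IsSolution r m) (hr : r ≤ 2 * √π) {z : ℂ} (hz : z ∈ ball 0 r) :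
    |(m z).im| < 3 * π := by
  by_contra! hge
  have h0 : (0 : ℂ) ∈ ball (0 : ℂ) r := mem_ball_self (dist_nonneg.trans_lt hz)
  have hcont : ContinuousOn (fun z => |(m z).im|) (ball 0 r) :=
    (continuous_abs.comp continuous_im).comp_continuousOn hm.differentiableOn.continuousOn
  obtain ⟨x, hx, hx3⟩ := (convex_ball (0 : ℂ) r).isPreconnected.intermediate_value h0 hz hcont
    ⟨by simp [hm.map_zero]; positivity, hge⟩
  refine abs_im_ne_three_pi ?_ hx3
  rw [hm.phi_comp x hx]
  exact norm_sq_div_two_lt ((mem_ball_zero_iff.mp hx).trans_le hr)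

theorem norm_le (hm : IsSolution r m) (hr : r ≤ 2 * √π) {z : ℂ} (hz : z ∈ ball 0 r) :
    ‖m z‖ ≤ 16 := by
  refine norm_le_of_norm_phi_le (hm.abs_im_lt hr hz).le ?_
  rw [hm.phi_comp z hz]
  exact (norm_sq_div_two_lt ((mem_ball_zero_iff.mp hz).trans_le hr)).le

theorem exists_mapClusterPt (hm : IsSolution r m) (hr₀ : 0 < r) (hr : r ≤ 2 * √π) {ζ : ℂ}
    (hζ : ζ ∈ sphere (0 : ℂ) r) :
    ∃ w, phi w = ζ ^ 2 / 2 ∧ MapClusterPt w (𝓝[ball 0 r] ζ) m := by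
  have : (𝓝[ball (0 : ℂ) r] ζ).NeBot := mem_closure_iff_nhdsWithin_neBot.mp <| by
    rw [closure_ball 0 hr₀.ne']; exact sphere_subset_closedBall hζ
  have hbdd : map m (𝓝[ball 0 r] ζ) ≤ 𝓟 (closedBall 0 16) :=
    le_principal_iff.mpr <| mem_map.mpr <| mem_of_superset self_mem_nhdsWithin fun z hz =>
      mem_closedBall_zero_iff.mpr (hm.norm_le hr hz)
  obtain ⟨w, -, hw : MapClusterPt w (𝓝[ball 0 r] ζ) m⟩ := isCompact_closedBall (0 : ℂ) 16 hbdd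
  refine ⟨w, ?_, hw⟩
  have hcomp : (fun z => phi (m z)) =ᶠ[𝓝[ball 0 r] ζ] fun z => z ^ 2 / 2 :=
    eventually_nhdsWithin_of_forall hm.phi_comp
  have hphi : MapClusterPt (phi w) (𝓝[ball 0 r] ζ) fun z => z ^ 2 / 2 :=
    hcomp.mapClusterPt_iff.mp (hw.continuousAt_comp (differentiable_phi w).continuousAt)
  have hq : Tendsto (fun z : ℂ => z ^ 2 / 2) (𝓝[ball 0 r] ζ) (𝓝 (ζ ^ 2 / 2)) :=
    ((continuous_pow 2).div_const 2).continuousAt.tendsto.mono_left nhdsWithin_le_nhds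
  exact eq_of_nhds_neBot (hphi.clusterPt.mono hq).neBot

theorem exists_local_extension (hm : IsSolution r m) (hr₀ : 0 < r) (hr : r < 2 * √π) {ζ : ℂ}
    (hζ : ζ ∈ sphere (0 : ℂ) r) :
    ∃ δ > 0, ∃ e : ℂ → ℂ, DifferentiableOn ℂ e (ball ζ δ) ∧ EqOn m e (ball ζ δ ∩ ball 0 r) := by
  obtain ⟨w, hw, hcl⟩ := hm.exists_mapClusterPt hr₀ hr.le hζ
  have hζr : ‖ζ‖ = r := mem_sphere_zero_iff_norm.mp hζ
  have hφ' : deriv phi w ≠ 0 := by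
    have hlt : ‖phi w‖ < 2 * π := hw ▸ norm_sq_div_two_lt (hζr ▸ hr)
    have hne : phi w ≠ 0 := by
      rw [hw]; exact div_ne_zero (pow_ne_zero 2 (norm_pos_iff.mp (hζr ▸ hr₀))) two_ne_zero
    rw [(hasDerivAt_phi w).deriv, sub_ne_zero]
    exact (exp_neg_ne_one hlt hne).symm
  obtain ⟨g, hga, hg_left, -⟩ := (differentiable_phi.analyticAt w).exists_localInverse hφ'
  rw [hw] at hga
  have hq : Tendsto (fun z : ℂ => z ^ 2 / 2) (𝓝 ζ) (𝓝 (ζ ^ 2 / 2)) :=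
    ((continuous_pow 2).div_const 2).continuousAt.tendsto
  obtain ⟨δ, hδ, hδg⟩ :=
    Metric.eventually_nhds_iff_ball.mp (hq.eventually hga.eventually_analyticAt)
  have he : DifferentiableOn ℂ (fun z => g (z ^ 2 / 2)) (ball ζ δ) := fun z hz =>
    ((hδg z hz).differentiableAt.comp z (by fun_prop)).differentiableWithinAt
  refine ⟨δ, hδ, _, he, ?_⟩
  have hO : IsOpen (ball ζ δ ∩ ball (0 : ℂ) r) := isOpen_ball.inter isOpen_ball
  have hO_mem : ball ζ δ ∩ ball 0 r ∈ 𝓝[ball 0 r] ζ :=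
    inter_comm (ball (0 : ℂ) r) _ ▸ inter_mem_nhdsWithin _ (ball_mem_nhds ζ hδ)
  obtain ⟨z₀, hz₀, hz₀O⟩ :=
    ((hcl.frequently (eventually_eventually_nhds.mpr hg_left)).and_eventually hO_mem).exists
  have hm_cont : ContinuousAt m z₀ :=
    (hm.differentiableOn.differentiableAt (isOpen_ball.mem_nhds hz₀O.2)).continuousAt
  have hev : m =ᶠ[𝓝 z₀] fun z => g (z ^ 2 / 2) := by
    filter_upwards [hm_cont.eventually hz₀, hO.mem_nhds hz₀O] with z h₁ h₂
    rw [← hm.phi_comp z h₂.2, h₁]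
  exact ((hm.differentiableOn.mono inter_subset_right).analyticOnNhd hO
    ).eqOn_of_preconnected_of_eventuallyEq ((he.mono inter_subset_left).analyticOnNhd hO)
    ((convex_ball ζ δ).inter (convex_ball 0 r)).isPreconnected hz₀O hev

theorem exists_gt (hm : IsSolution r m) (hr₀ : 0 < r) (hr : r < 2 * √π) :
    ∃ r' > r, ∃ m', IsSolution r' m' := by
  obtain ⟨ε, hε, M, hM, hMm⟩ := hm.differentiableOn.exists_extension_ball hr₀
    fun ζ hζ => hm.exists_local_extension hr₀ hr hζ
  have hev : M =ᶠ[𝓝 0] m := Filter.eventuallyEq_of_mem (ball_mem_nhds 0 hr₀) hMm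
  refine ⟨r + ε, by linarith, M, hM, by rw [hev.eq_of_nhds, hm.map_zero],
    by rw [hev.deriv_eq, hm.deriv_zero], fun z hz => ?_⟩
  refine ((differentiable_phi.comp_differentiableOn hM).analyticOnNhd isOpen_ball
    ).eqOn_of_preconnected_of_eventuallyEq (g := fun z => z ^ 2 / 2)
    (((differentiable_id.pow 2).div_const 2).differentiableOn.analyticOnNhd isOpen_ball)
    (convex_ball 0 (r + ε)).isPreconnected (mem_ball_self (by linarith)) ?_ hz
  filter_upwards [ball_mem_nhds (0 : ℂ) hr₀] with z hz
  rw [Function.comp_apply, hMm hz, hm.phi_comp z hz]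

end IsSolution

theorem exists_isSolution_of_forall_lt {R : ℝ} (hR : 0 < R)
    (H : ∀ r ∈ Ioo 0 R, ∃ m, IsSolution r m) : ∃ m, IsSolution R m := by
  choose! M hM using H
  have hs : ∀ z ∈ ball (0 : ℂ) R,
      (‖z‖ + R) / 2 ∈ Ioo 0 R ∧ z ∈ ball (0 : ℂ) ((‖z‖ + R) / 2) := by
    intro z hz
    rw [mem_ball_zero_iff] at hz ⊢
    exact ⟨⟨by linarith [norm_nonneg z], by linarith⟩, by linarith⟩
  have hloc : ∀ z ∈ ball (0 : ℂ) R,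
      (fun y => M ((‖y‖ + R) / 2) y) =ᶠ[𝓝 z] M ((‖z‖ + R) / 2) := by
    intro z hz
    obtain ⟨hsz, hzs⟩ := hs z hz
    filter_upwards [isOpen_ball.mem_nhds hzs] with y hy
    obtain ⟨hsy, hys⟩ := hs y (ball_subset_ball hsz.2.le hy)
    exact ((hM _ hsy).mono (min_le_left _ _)).eqOn ((hM _ hsz).mono (min_le_right _ _))
      (lt_min hsy.1 hsz.1) (mem_ball_zero_iff.mpr
        (lt_min (mem_ball_zero_iff.mp hys) (mem_ball_zero_iff.mp hy)))
  have h0 : (0 : ℂ) ∈ ball (0 : ℂ) R := mem_ball_self hR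
  refine ⟨fun y => M ((‖y‖ + R) / 2) y, fun z hz => ?_, (hM _ (hs 0 h0).1).map_zero, ?_,
    fun z hz => (hM _ (hs z hz).1).phi_comp z (hs z hz).2⟩
  · exact (((hM _ (hs z hz).1).differentiableOn.differentiableAt (isOpen_ball.mem_nhds
      (hs z hz).2)).congr_of_eventuallyEq (hloc z hz)).differentiableWithinAt
  · rw [(hloc 0 h0).deriv_eq]
    exact (hM _ (hs 0 h0).1).deriv_zero

theorem exists_isSolution : ∃ m, IsSolution (2 * √π) m := by
  set R := 2 * √π
  have hR : 0 < R := by positivity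
  set A := {r | r ∈ Ioc 0 R ∧ ∃ m, IsSolution r m}
  obtain ⟨r₀, hr₀, m₀, hm₀⟩ := exists_isSolution_near_zero
  have hA : min r₀ R ∈ A := ⟨⟨lt_min hr₀ hR, min_le_right _ _⟩, m₀, hm₀.mono (min_le_left _ _)⟩
  have hbdd : BddAbove A := ⟨R, fun r hr => hr.1.2⟩
  have hpos : 0 < sSup A := hA.1.1.trans_le (le_csSup hbdd hA)
  have hle : sSup A ≤ R := csSup_le ⟨_, hA⟩ fun r hr => hr.1.2
  obtain ⟨m, hm⟩ := exists_isSolution_of_forall_lt hpos fun r hr => by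
    obtain ⟨a, ⟨-, m, hm⟩, hra⟩ := exists_lt_of_lt_csSup ⟨_, hA⟩ hr.2
    exact ⟨m, hm.mono hra.le⟩
  rcases hle.eq_or_lt with heq | hlt
  · exact ⟨m, heq ▸ hm⟩
  · obtain ⟨r', hr', m', hm'⟩ := hm.exists_gt hpos hlt
    have : min r' R ∈ A := ⟨⟨hpos.trans (lt_min hr' hlt), min_le_right _ _⟩, m',
      hm'.mono (min_le_left _ _)⟩
    exact absurd (le_csSup hbdd this) (not_le.mpr (lt_min hr' hlt))

end LambertGerm

/-- there is a holomorphic function `ℓ` on the disc `|z| < 2√π` with `ℓ(0)=0`,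
`ℓ'(0)=1` and `(1-ℓ(z)) e^{ℓ(z)} = e^{-z²/2}` (the branch `ℓ(z) = W(-e^{-1-z²/2}) + 1` of the
Lambert W-function). -/
theorem stmt19 :
    ∃ l : ℂ → ℂ,
      DifferentiableOn ℂ l (Metric.ball (0 : ℂ) (2 * Real.sqrt Real.pi)) ∧
      l 0 = 0 ∧ deriv l 0 = 1 ∧
      ∀ z ∈ Metric.ball (0 : ℂ) (2 * Real.sqrt Real.pi),
        (1 - l z) * Complex.exp (l z) = Complex.exp (-z ^ 2 / 2) := by
  obtain ⟨m, hm⟩ := LambertGerm.exists_isSolution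
  refine ⟨fun z => 1 - exp (-m z), (differentiableOn_const 1).sub hm.differentiableOn.neg.cexp,
    by simp [hm.map_zero], ?_, fun z hz => ?_⟩
  · have h := ((hm.hasDerivAt_zero (by positivity)).neg.cexp.const_sub 1)
    simpa [hm.map_zero] using h.deriv
  · rw [LambertGerm.one_sub_mul_exp_eq_exp_neg_phi, hm.phi_comp z hz, neg_div]
end
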